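/- arXiv:2503.16098 — 9 statements merged into one kernel-verified Lean document; each statement's English description precedes it below -/
import Mathlib

section
/- Let Y1, Y0, X be measurable spaces, μ1X and μ0X probability measures on Y1 × X and Y0 × X such that M(μ1X, μ0X) is nonempty, and let m : Y1 × Y0 × X → ℝ^k be a bounded measurable function. Then the infimum over μ ∈ M(μ1X, μ0X) of ‖∫ m dμ‖ equals 0 if and only if for every t ∈ ℝ^k with ‖t‖ ≤ 1, the infimum over μ ∈ M(μ1X, μ0X) of ∫ ⟨t, m⟩ dμ is at most 0. (Lemma A.1 of the paper: the forward implication is part (i), and the converse, proved via a minimax theorem, is part (ii), asserting the existence of a sequence μ^(s) ∈ M(μ1X, μ0X) with ∫ m dμ^(s) → 0.) -/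
open MeasureTheory
open scoped RealInnerProductSpace

/-- The set `M(μ1X, μ0X)` of probability measures on `Y1 × Y0 × X` whose projection on
`(Y1, X)` is `μ1X` and whose projection on `(Y0, X)` is `μ0X`. -/
def MSet {Y1 Y0 X : Type*} [MeasurableSpace Y1] [MeasurableSpace Y0] [MeasurableSpace X]
    (μ1X : Measure (Y1 × X)) (μ0X : Measure (Y0 × X)) :
    Set (Measure (Y1 × Y0 × X)) :=
  {μ | IsProbabilityMeasure μ ∧
    μ.map (fun p => (p.1, p.2.2)) = μ1X ∧ μ.map (fun p => (p.2.1, p.2.2)) = μ0X}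

/-- Lemma A.1: the infimum of `‖∫ m dμ‖` over `M(μ1X, μ0X)` vanishes iff for every `t` in the
closed unit ball the optimal transport value `inf ∫ ⟨t, m⟩ dμ` is nonpositive. -/
theorem inf_norm_integral_eq_zero_iff_ball_OT_nonpos
    {Y1 Y0 X : Type*} [MeasurableSpace Y1] [MeasurableSpace Y0] [MeasurableSpace X]
    (μ1X : Measure (Y1 × X)) (μ0X : Measure (Y0 × X))
    [IsProbabilityMeasure μ1X] [IsProbabilityMeasure μ0X]
    (hne : (MSet μ1X μ0X).Nonempty)
    {k : ℕ} (m : Y1 × Y0 × X → EuclideanSpace ℝ (Fin k))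
    (hmeas : Measurable m) (hbd : ∃ C : ℝ, ∀ p, ‖m p‖ ≤ C) :
    sInf {r : ℝ | ∃ μ ∈ MSet μ1X μ0X, r = ‖∫ p, m p ∂μ‖} = 0 ↔
      ∀ t : EuclideanSpace ℝ (Fin k), ‖t‖ ≤ 1 →
        sInf {r : ℝ | ∃ μ ∈ MSet μ1X μ0X, r = ∫ p, ⟪t, m p⟫ ∂μ} ≤ 0 := by
  classical
  obtain ⟨C, hC⟩ := hbd
  set D : ℝ := max C 0 with hDdef
  have hD0 : 0 ≤ D := le_max_right _ _
  have hD : ∀ p, ‖m p‖ ≤ D := fun p => (hC p).trans (le_max_left _ _)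
  -- integrability
  have hint : ∀ μ : Measure (Y1 × Y0 × X), IsProbabilityMeasure μ → Integrable m μ := by
    intro μ hμ
    exact (integrable_const D).mono' hmeas.aestronglyMeasurable (Filter.Eventually.of_forall hD)
  -- the set of attainable expectations
  set V : Set (EuclideanSpace ℝ (Fin k)) :=
    (fun μ : Measure (Y1 × Y0 × X) => ∫ p, m p ∂μ) '' (MSet μ1X μ0X) with hVdef
  have hVne : V.Nonempty := hne.image _
  -- convexity of V
  have hVconv : Convex ℝ V := by
    rintro v1 ⟨μ, hμ, rfl⟩ v2 ⟨ν, hν, rfl⟩ a b ha hb hab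
    refine ⟨ENNReal.ofReal a • μ + ENNReal.ofReal b • ν, ?_, ?_⟩
    · obtain ⟨hμP, hμ1, hμ0⟩ := hμ
      obtain ⟨hνP, hν1, hν0⟩ := hν
      refine ⟨⟨?_⟩, ?_, ?_⟩
      · simp [Measure.add_apply, measure_univ, ← ENNReal.ofReal_add, ha, hb, hab]
      · rw [Measure.map_add _ _ (by fun_prop), Measure.map_smul, Measure.map_smul, hμ1, hν1,
          ← add_smul, ← ENNReal.ofReal_add ha hb, hab, ENNReal.ofReal_one, one_smul]
      · rw [Measure.map_add _ _ (by fun_prop), Measure.map_smul, Measure.map_smul, hμ0, hν0,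
          ← add_smul, ← ENNReal.ofReal_add ha hb, hab, ENNReal.ofReal_one, one_smul]
    · have h1 : Integrable m (ENNReal.ofReal a • μ) :=
        (hint μ hμ.1).smul_measure ENNReal.ofReal_ne_top
      have h2 : Integrable m (ENNReal.ofReal b • ν) :=
        (hint ν hν.1).smul_measure ENNReal.ofReal_ne_top
      show ∫ p, m p ∂(ENNReal.ofReal a • μ + ENNReal.ofReal b • ν) =
        a • ∫ p, m p ∂μ + b • ∫ p, m p ∂ν
      rw [integral_add_measure h1 h2, integral_smul_measure, integral_smul_measure,
        ENNReal.toReal_ofReal ha, ENNReal.toReal_ofReal hb]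
  -- the two sInf sets as images of V
  have hSnorm : {r : ℝ | ∃ μ ∈ MSet μ1X μ0X, r = ‖∫ p, m p ∂μ‖} = norm '' V := by
    ext r
    constructor
    · rintro ⟨μ, hμ, rfl⟩; exact ⟨_, ⟨μ, hμ, rfl⟩, rfl⟩
    · rintro ⟨v, ⟨μ, hμ, rfl⟩, rfl⟩; exact ⟨μ, hμ, rfl⟩
  have hSt : ∀ t : EuclideanSpace ℝ (Fin k),
      {r : ℝ | ∃ μ ∈ MSet μ1X μ0X, r = ∫ p, ⟪t, m p⟫ ∂μ} = (fun v => ⟪t, v⟫) '' V := by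
    intro t
    ext r
    constructor
    · rintro ⟨μ, hμ, rfl⟩
      exact ⟨_, ⟨μ, hμ, rfl⟩, (integral_inner (hint μ hμ.1) t).symm⟩
    · rintro ⟨v, ⟨μ, hμ, rfl⟩, rfl⟩
      exact ⟨μ, hμ, (integral_inner (hint μ hμ.1) t).symm⟩
  -- bounds on elements of V
  have hVbd : ∀ v ∈ V, ‖v‖ ≤ D := by
    rintro v ⟨μ, hμ, rfl⟩
    haveI := hμ.1
    calc ‖∫ p, m p ∂μ‖ ≤ D * (μ Set.univ).toReal :=
          norm_integral_le_of_norm_le_const (Filter.Eventually.of_forall hD)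
      _ = D := by simp [measure_univ]
  constructor
  · -- forward direction
    intro h0 t ht
    rw [hSt t]
    have hSne : ((fun v => ⟪t, v⟫) '' V).Nonempty := hVne.image _
    have hbdd : BddBelow ((fun v => ⟪t, v⟫) '' V) := by
      refine ⟨-D, ?_⟩
      rintro r ⟨v, hv, rfl⟩
      show -D ≤ ⟪t, v⟫
      calc -D ≤ -(‖t‖ * ‖v‖) := by
              have : ‖t‖ * ‖v‖ ≤ 1 * D := mul_le_mul ht (hVbd v hv) (norm_nonneg _) zero_le_one
              linarith [this]
        _ ≤ ⟪t, v⟫ := neg_le_of_abs_le (abs_real_inner_le_norm t v)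
    refine le_of_forall_pos_le_add ?_
    intro ε hε
    have hNne : {r : ℝ | ∃ μ ∈ MSet μ1X μ0X, r = ‖∫ p, m p ∂μ‖}.Nonempty := by
      obtain ⟨μ, hμ⟩ := hne; exact ⟨_, μ, hμ, rfl⟩
    have hlt : sInf {r : ℝ | ∃ μ ∈ MSet μ1X μ0X, r = ‖∫ p, m p ∂μ‖} < ε := by rw [h0]; exact hε
    obtain ⟨r, hr, hrε⟩ := exists_lt_of_csInf_lt hNne hlt
    obtain ⟨μ, hμ, rfl⟩ := hr
    have hmem : ⟪t, ∫ p, m p ∂μ⟫ ∈ (fun v => ⟪t, v⟫) '' V := ⟨_, ⟨μ, hμ, rfl⟩, rfl⟩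
    have : ⟪t, ∫ p, m p ∂μ⟫ ≤ ‖∫ p, m p ∂μ‖ := by
      calc ⟪t, ∫ p, m p ∂μ⟫ ≤ ‖t‖ * ‖∫ p, m p ∂μ‖ := real_inner_le_norm _ _
        _ ≤ 1 * ‖∫ p, m p ∂μ‖ := mul_le_mul_of_nonneg_right ht (norm_nonneg _)
        _ = ‖∫ p, m p ∂μ‖ := one_mul _
    have := csInf_le hbdd hmem
    linarith
  · -- reverse direction: separation argument
    intro h
    set K : Set (EuclideanSpace ℝ (Fin k)) := closure V with hKdef
    have hKne : K.Nonempty := hVne.closure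
    have hKconv : Convex ℝ K := hVconv.closure
    have hKcomp : IsComplete K := isClosed_closure.isComplete
    obtain ⟨v0, hv0K, hv0⟩ := exists_norm_eq_iInf_of_complete_convex hKne hKcomp hKconv 0
    have hkey : ∀ w ∈ K, ‖v0‖ ^ 2 ≤ ⟪v0, w⟫ := by
      intro w hw
      have := (norm_eq_iInf_iff_real_inner_le_zero hKconv hv0K).mp hv0 w hw
      have h2 : ⟪(0 : EuclideanSpace ℝ (Fin k)) - v0, w - v0⟫ = -⟪v0, w⟫ + ‖v0‖ ^ 2 := by
        rw [zero_sub, inner_neg_left, inner_sub_right, real_inner_self_eq_norm_sq]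
        ring
      rw [h2] at this
      linarith
    have hv00 : v0 = 0 := by
      by_contra hv0ne
      have hnpos : 0 < ‖v0‖ := norm_pos_iff.mpr hv0ne
      set t : EuclideanSpace ℝ (Fin k) := ‖v0‖⁻¹ • v0 with htdef
      have ht : ‖t‖ ≤ 1 := by
        rw [htdef, norm_smul, norm_inv, norm_norm, inv_mul_cancel₀ hnpos.ne']
      have hle := h t ht
      rw [hSt t] at hle
      have hge : ‖v0‖ ≤ sInf ((fun v => ⟪t, v⟫) '' V) := by
        refine le_csInf (hVne.image _) ?_
        rintro r ⟨v, hv, rfl⟩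
        have hvK : v ∈ K := subset_closure hv
        have hk := hkey v hvK
        show ‖v0‖ ≤ ⟪t, v⟫
        calc ‖v0‖ = ‖v0‖⁻¹ * ‖v0‖ ^ 2 := by field_simp [sq]
          _ ≤ ‖v0‖⁻¹ * ⟪v0, v⟫ := mul_le_mul_of_nonneg_left hk (inv_nonneg.mpr hnpos.le)
          _ = ⟪t, v⟫ := (real_inner_smul_left _ _ _).symm
      linarith
    -- 0 ∈ closure V, conclude
    rw [hv00] at hv0K
    rw [hSnorm]
    have hbdd : BddBelow (norm '' V) := ⟨0, by rintro r ⟨v, _, rfl⟩; exact norm_nonneg _⟩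
    have hge : 0 ≤ sInf (norm '' V) :=
      le_csInf (hVne.image _) (by rintro r ⟨v, _, rfl⟩; exact norm_nonneg _)
    have hle : sInf (norm '' V) ≤ 0 := by
      refine le_of_forall_pos_le_add ?_
      intro ε hε
      obtain ⟨v, hvV, hvd⟩ := Metric.mem_closure_iff.mp hv0K ε hε
      have : ‖v‖ < ε := by simpa [dist_eq_norm] using hvd
      have := csInf_le hbdd ⟨v, hvV, rfl⟩
      linarith
    linarith
end

section
/- Let Y1, Y0, X be measurable spaces, μ1X and μ0X probability measures on Y1 × X and Y0 × X, and let m : Y1 × Y0 → ℝ^k be bounded measurable (not depending on x). Denote by μ1 and μ0 the Y1-marginal of μ1X and the Y0-marginal of μ0X. If there exists μ ∈ M(μ1X, μ0X) with ∫ m(y1, y0) dμ(y1, y0, x) = 0, then for every t in the unit sphere of ℝ^k the infimum over couplings γ ∈ Π(μ1, μ0) of ∫ ⟨t, m(y1, y0)⟩ dγ is at most 0. In other words, the identified set Θ_I that uses the common covariate X is contained in the outer set Θ^O that ignores X (Proposition 1). -/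
open MeasureTheory
open scoped RealInnerProductSpace

/-- Proposition 1: `Θ_I ⊆ Θ^O`.  If the moment condition (with `m` not depending on `x`) holds
for some `μ ∈ M(μ1X, μ0X)`, then for every `t` on the unit sphere the optimal transport value
between the marginals `μ1` and `μ0` (which ignore `X`) is nonpositive. -/
theorem identified_subset_outer
    {Y1 Y0 X : Type*} [MeasurableSpace Y1] [MeasurableSpace Y0] [MeasurableSpace X]
    (μ1X : Measure (Y1 × X)) (μ0X : Measure (Y0 × X))
    [IsProbabilityMeasure μ1X] [IsProbabilityMeasure μ0X]
    {k : ℕ} (m : Y1 × Y0 → EuclideanSpace ℝ (Fin k))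
    (hmeas : Measurable m) (hbd : ∃ C : ℝ, ∀ q, ‖m q‖ ≤ C)
    (h : ∃ μ ∈ MSet μ1X μ0X, ∫ p, m (p.1, p.2.1) ∂μ = 0) :
    ∀ t : EuclideanSpace ℝ (Fin k), ‖t‖ = 1 →
      sInf {r : ℝ | ∃ γ : Measure (Y1 × Y0), IsProbabilityMeasure γ ∧
          γ.map Prod.fst = μ1X.map Prod.fst ∧ γ.map Prod.snd = μ0X.map Prod.fst ∧
          r = ∫ q, ⟪t, m q⟫ ∂γ} ≤ 0 := by
  intro t ht
  obtain ⟨C, hC⟩ := hbd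
  obtain ⟨μ, ⟨hμprob, h1, h0⟩, hint⟩ := h
  haveI := hμprob
  set f : Y1 × Y0 × X → Y1 × Y0 := fun p => (p.1, p.2.1) with hf
  have hfm : Measurable f := measurable_fst.prodMk measurable_snd.fst
  -- integrability of m ∘ f under μ
  have hmf : Measurable (fun p => m (f p)) := hmeas.comp hfm
  have hInt : Integrable (fun p => m (f p)) μ := by
    refine ⟨hmf.aestronglyMeasurable, ?_⟩
    exact MeasureTheory.HasFiniteIntegral.of_bounded (C := C) (Filter.Eventually.of_forall fun p => hC _)
  set γ : Measure (Y1 × Y0) := μ.map f with hγ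
  haveI hγprob : IsProbabilityMeasure γ := Measure.isProbabilityMeasure_map hfm.aemeasurable
  have hmg : Integrable m γ := by
    refine ⟨hmeas.aestronglyMeasurable, ?_⟩
    exact MeasureTheory.HasFiniteIntegral.of_bounded (C := C) (Filter.Eventually.of_forall fun q => hC _)
  have hmem : (0 : ℝ) ∈ {r : ℝ | ∃ γ : Measure (Y1 × Y0), IsProbabilityMeasure γ ∧
          γ.map Prod.fst = μ1X.map Prod.fst ∧ γ.map Prod.snd = μ0X.map Prod.fst ∧
          r = ∫ q, ⟪t, m q⟫ ∂γ} := by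
    refine ⟨γ, hγprob, ?_, ?_, ?_⟩
    · rw [hγ, Measure.map_map measurable_fst hfm, ← h1,
        Measure.map_map measurable_fst (measurable_fst.prodMk measurable_snd.snd)]
      rfl
    · rw [hγ, Measure.map_map measurable_snd hfm, ← h0,
        Measure.map_map measurable_fst (measurable_snd.fst.prodMk measurable_snd.snd)]
      rfl
    · rw [hγ, integral_map hfm.aemeasurable]
      · have : ∫ p, ⟪t, m (f p)⟫ ∂μ = ⟪t, ∫ p, m (f p) ∂μ⟫ := (integral_inner hInt t)
        rw [this, hint, inner_zero_right]
      · exact (measurable_const.inner hmeas).aestronglyMeasurable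
  have hbdd : BddBelow {r : ℝ | ∃ γ : Measure (Y1 × Y0), IsProbabilityMeasure γ ∧
          γ.map Prod.fst = μ1X.map Prod.fst ∧ γ.map Prod.snd = μ0X.map Prod.fst ∧
          r = ∫ q, ⟪t, m q⟫ ∂γ} := by
    refine ⟨-C, ?_⟩
    rintro r ⟨γ', hγ', -, -, rfl⟩
    have hb : ∀ q, ‖⟪t, m q⟫‖ ≤ C := by
      intro q
      calc ‖⟪t, m q⟫‖ ≤ ‖t‖ * ‖m q‖ := norm_inner_le_norm t (m q)
        _ ≤ C := by rw [ht, one_mul]; exact hC q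
    have := norm_integral_le_of_norm_le_const (μ := γ') (f := fun q => ⟪t, m q⟫) (C := C)
      (Filter.Eventually.of_forall hb)
    have habs : |∫ q, ⟪t, m q⟫ ∂γ'| ≤ C := by simpa using this
    linarith [abs_le.mp habs]
  exact csInf_le hbdd hmem
end

section
/- Let Y1, Y0, X be standard Borel spaces, μ1X a probability measure on Y1 × X with X-marginal μX, g0 : X → Y0 a measurable function, and let μ0X be the pushforward of μX under x ↦ (g0(x), x) (so that the conditional law of Y0 given X = x is the Dirac mass at g0(x)). Let m : Y1 × Y0 × X → ℝ^k be bounded measurable. Then there exists μ ∈ M(μ1X, μ0X) with ∫ m dμ = 0 if and only if ∫ m(y1, g0(x), x) dμ1X(y1, x) = 0. That is, when Y0 is perfectly dependent on X, the identified set reduces to the identified set of the moment model with complete data (Proposition 2). -/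
open MeasureTheory

/-- Proposition 2: if the conditional law of `Y0` given `X = x` is Dirac at `g0 x` (i.e. `μ0X`
is the pushforward of `μX` under `x ↦ (g0 x, x)`), then the moment condition holds for some
`μ ∈ M(μ1X, μ0X)` iff the complete-data moment condition `∫ m(y1, g0 x, x) dμ1X = 0` holds. -/
theorem perfect_dependence_reduces_to_complete_data
    {Y1 Y0 X : Type*}
    [MeasurableSpace Y1] [StandardBorelSpace Y1]
    [MeasurableSpace Y0] [StandardBorelSpace Y0]
    [MeasurableSpace X] [StandardBorelSpace X]
    (μ1X : Measure (Y1 × X)) [IsProbabilityMeasure μ1X]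
    (g0 : X → Y0) (hg0 : Measurable g0)
    (μX : Measure X) (hμX : μX = μ1X.map Prod.snd)
    (μ0X : Measure (Y0 × X)) (hμ0X : μ0X = μX.map (fun x => (g0 x, x)))
    {k : ℕ} (m : Y1 × Y0 × X → EuclideanSpace ℝ (Fin k))
    (hmeas : Measurable m) (hbd : ∃ C : ℝ, ∀ p, ‖m p‖ ≤ C) :
    (∃ μ ∈ MSet μ1X μ0X, ∫ p, m p ∂μ = 0) ↔
      ∫ q : Y1 × X, m (q.1, g0 q.2, q.2) ∂μ1X = 0 := by
  have hφ : Measurable fun x : X => (g0 x, x) := by fun_prop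
  have hπ1 : Measurable fun p : Y1 × Y0 × X => (p.1, p.2.2) := by fun_prop
  have hπ0 : Measurable fun p : Y1 × Y0 × X => (p.2.1, p.2.2) := by fun_prop
  have hι : Measurable fun q : Y1 × X => (q.1, g0 q.2, q.2) := by fun_prop
  have hm2 : Measurable fun q : Y1 × X => m (q.1, g0 q.2, q.2) := by fun_prop
  constructor
  · rintro ⟨μ, ⟨hprob, h1, h0⟩, hint⟩
    letI := upgradeStandardBorel Y0
    have hS : MeasurableSet {p : Y0 × X | p.1 = g0 p.2} :=
      StronglyMeasurable.measurableSet_eq_fun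
        measurable_fst.stronglyMeasurable (hg0.comp measurable_snd).stronglyMeasurable
    have h0null : μ0X {p : Y0 × X | p.1 = g0 p.2}ᶜ = 0 := by
      rw [hμ0X, Measure.map_apply hφ hS.compl]
      have : (fun x => (g0 x, x)) ⁻¹' ({p : Y0 × X | p.1 = g0 p.2}ᶜ) = ∅ := by
        ext x; simp
      rw [this]; simp
    have hae : ∀ᵐ p ∂μ, p.2.1 = g0 p.2.2 := by
      have h2 : μ.map (fun p : Y1 × Y0 × X => (p.2.1, p.2.2)) {p : Y0 × X | p.1 = g0 p.2}ᶜ = 0 :=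
        h0 ▸ h0null
      rw [Measure.map_apply hπ0 hS.compl] at h2
      rw [ae_iff]
      rw [show {a : Y1 × Y0 × X | ¬a.2.1 = g0 a.2.2}
          = (fun p : Y1 × Y0 × X => (p.2.1, p.2.2)) ⁻¹' ({p : Y0 × X | p.1 = g0 p.2}ᶜ) from by
        ext p; simp]
      exact h2
    have hint2 : ∫ p, m p ∂μ = ∫ q : Y1 × X, m (q.1, g0 q.2, q.2) ∂μ1X := by
      rw [show (∫ p, m p ∂μ) = ∫ p : Y1 × Y0 × X, m (p.1, g0 p.2.2, p.2.2) ∂μ from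
        integral_congr_ae (hae.mono fun p hp => by
          show m p = m (p.1, g0 p.2.2, p.2.2)
          rw [← hp])]
      rw [← h1, integral_map hπ1.aemeasurable hm2.aestronglyMeasurable]
    rw [← hint2]; exact hint
  · intro h
    refine ⟨μ1X.map (fun q : Y1 × X => (q.1, g0 q.2, q.2)), ⟨?_, ?_, ?_⟩, ?_⟩
    · exact Measure.isProbabilityMeasure_map hι.aemeasurable
    · rw [Measure.map_map hπ1 hι]
      have : ((fun p : Y1 × Y0 × X => (p.1, p.2.2)) ∘ fun q : Y1 × X => (q.1, g0 q.2, q.2)) = id := by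
        ext q <;> rfl
      rw [this, Measure.map_id]
    · rw [Measure.map_map hπ0 hι, hμ0X, hμX, Measure.map_map hφ measurable_snd]
      rfl
    · rw [integral_map hι.aemeasurable hmeas.aestronglyMeasurable]
      exact h
end

section
/- Let Y1, Y0, X be compact metric spaces with Borel σ-algebras, μ1X and μ0X Borel probability measures on Y1 × X and Y0 × X with the same X-marginal, m1 : Y0 × X → (k × d_θ real matrices) continuous, m2 : Y1 × Y0 × X → ℝ^k continuous, and let Θ ⊆ ℝ^{d_θ} be compact and convex with nonempty interior. Then the identified set Θ_I := {θ ∈ Θ : there exists μ ∈ M(μ1X, μ0X) with ∫ (m1(y0, x) θ + m2(y1, y0, x)) dμ = 0} is closed and convex (Theorem 2(ii)). -/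
/-!
Only the `(y0, x)`-marginal of `μ` enters the `θ`-part of the moment, and it is fixed to `μ0X`,
so with `A := ∫ m1 dμ0X` the identified set is `Θ ∩ (-A)⁻¹' C` for
`C := {∫ m2 dμ | μ ∈ M(μ1X, μ0X)}`. The set `C` is convex because `M(μ1X, μ0X)` is closed under
mixtures, and compact because `M(μ1X, μ0X)` is weakly closed in the compact space of probability
measures on `Y1 × Y0 × X` and `μ ↦ ∫ m2 dμ` is weakly continuous.
-/

open MeasureTheory

namespace MeasureTheory.ProbabilityMeasure

lemma continuous_integral_of_finiteDimensional {Ω E : Type*} [TopologicalSpace Ω]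
    [CompactSpace Ω] [MeasurableSpace Ω] [OpensMeasurableSpace Ω] [NormedAddCommGroup E]
    [NormedSpace ℝ E] [FiniteDimensional ℝ E] {f : Ω → E} (hf : Continuous f) :
    Continuous fun ν : ProbabilityMeasure Ω => ∫ x, f x ∂(ν : Measure Ω) := by
  let e := (Module.finBasis ℝ E).equivFunL
  rw [← e.comp_continuous_iff]
  refine _root_.continuous_pi fun i => ?_
  let L : E →L[ℝ] ℝ :=
    (ContinuousLinearMap.proj (R := ℝ) (φ := fun _ => ℝ) i).comp (e : E →L[ℝ] _)
  convert continuous_integral_continuousMap (⟨L ∘ f, L.continuous.comp hf⟩ : C(Ω, ℝ))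
    using 2 with ν
  exact (L.integral_comp_comm (hf.integrable_of_hasCompactSupport (.of_compactSpace f))).symm

lemma isClosed_setOf_map_eq {W Z : Type*} [TopologicalSpace W] [MeasurableSpace W]
    [OpensMeasurableSpace W] [TopologicalSpace Z] [HasOuterApproxClosed Z] [MeasurableSpace Z]
    [BorelSpace Z] {π : W → Z} (hπ : Continuous π) (ρ : Measure Z) :
    IsClosed {ν : ProbabilityMeasure W | (ν : Measure W).map π = ρ} := by
  have hsub : {σ : ProbabilityMeasure Z | (σ : Measure Z) = ρ}.Subsingleton :=
    fun σ hσ τ hτ => toMeasure_injective (hσ.trans hτ.symm)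
  exact hsub.isClosed.preimage (continuous_map hπ)

end MeasureTheory.ProbabilityMeasure

lemma integral_ofReal_smul_add_measure {Ω E : Type*} [MeasurableSpace Ω] [NormedAddCommGroup E]
    [NormedSpace ℝ E] {f : Ω → E} {μ ν : Measure Ω} (hμ : Integrable f μ) (hν : Integrable f ν)
    {a b : ℝ} (ha : 0 ≤ a) (hb : 0 ≤ b) :
    ∫ x, f x ∂(ENNReal.ofReal a • μ + ENNReal.ofReal b • ν) = a • ∫ x, f x ∂μ + b • ∫ x, f x ∂ν := by
  rw [integral_add_measure (hμ.smul_measure ENNReal.ofReal_ne_top)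
    (hν.smul_measure ENNReal.ofReal_ne_top), integral_smul_measure, integral_smul_measure,
    ENNReal.toReal_ofReal ha, ENNReal.toReal_ofReal hb]

section MSet

variable {Y1 Y0 X : Type*} [MeasurableSpace Y1] [MeasurableSpace Y0] [MeasurableSpace X]
  {μ1X : Measure (Y1 × X)} {μ0X : Measure (Y0 × X)}

lemma ofReal_smul_add_mem_MSet {μ ν : Measure (Y1 × Y0 × X)} (hμ : μ ∈ MSet μ1X μ0X)
    (hν : ν ∈ MSet μ1X μ0X) {a b : ℝ} (ha : 0 ≤ a) (hb : 0 ≤ b) (hab : a + b = 1) :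
    ENNReal.ofReal a • μ + ENNReal.ofReal b • ν ∈ MSet μ1X μ0X := by
  obtain ⟨hμP, hμ1, hμ0⟩ := hμ
  obtain ⟨hνP, hν1, hν0⟩ := hν
  have hw : ENNReal.ofReal a + ENNReal.ofReal b = 1 := by
    rw [← ENNReal.ofReal_add ha hb, hab, ENNReal.ofReal_one]
  refine ⟨⟨by simp [hw]⟩, ?_, ?_⟩
  · rw [Measure.map_add _ _ (by fun_prop), Measure.map_smul, Measure.map_smul, hμ1, hν1,
      ← add_smul, hw, one_smul]
  · rw [Measure.map_add _ _ (by fun_prop), Measure.map_smul, Measure.map_smul, hμ0, hν0,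
      ← add_smul, hw, one_smul]

variable [MetricSpace Y1] [CompactSpace Y1] [BorelSpace Y1]
  [MetricSpace Y0] [CompactSpace Y0] [BorelSpace Y0]
  [MetricSpace X] [CompactSpace X] [BorelSpace X]

lemma isCompact_setOf_coe_mem_MSet :
    IsCompact {ν : ProbabilityMeasure (Y1 × Y0 × X) | (ν : Measure _) ∈ MSet μ1X μ0X} := by
  refine IsClosed.isCompact ?_
  convert (ProbabilityMeasure.isClosed_setOf_map_eq (π := fun p : Y1 × Y0 × X => (p.1, p.2.2))
    (by fun_prop) μ1X).inter (ProbabilityMeasure.isClosed_setOf_map_eq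
    (π := fun p : Y1 × Y0 × X => (p.2.1, p.2.2)) (by fun_prop) μ0X) using 1
  ext ν
  exact and_iff_right ν.prop

variable {E : Type*} [NormedAddCommGroup E] [NormedSpace ℝ E]

lemma convex_image_integral_MSet {f : Y1 × Y0 × X → E} (hf : Continuous f) :
    Convex ℝ ((fun μ => ∫ p, f p ∂μ) '' MSet μ1X μ0X) := by
  rintro - ⟨μ, hμ, rfl⟩ - ⟨ν, hν, rfl⟩ a b ha hb hab
  have := hμ.1
  have := hν.1
  refine ⟨_, ofReal_smul_add_mem_MSet hμ hν ha hb hab, ?_⟩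
  exact integral_ofReal_smul_add_measure (hf.integrable_of_hasCompactSupport (.of_compactSpace f))
    (hf.integrable_of_hasCompactSupport (.of_compactSpace f)) ha hb

lemma isCompact_image_integral_MSet [FiniteDimensional ℝ E] {f : Y1 × Y0 × X → E}
    (hf : Continuous f) : IsCompact ((fun μ => ∫ p, f p ∂μ) '' MSet μ1X μ0X) := by
  have himage : (fun μ => ∫ p, f p ∂μ) '' MSet μ1X μ0X =
      (fun ν : ProbabilityMeasure (Y1 × Y0 × X) => ∫ p, f p ∂(ν : Measure _)) ''
        {ν | (ν : Measure _) ∈ MSet μ1X μ0X} := by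
    ext c
    constructor
    · rintro ⟨μ, hμ, rfl⟩
      exact ⟨⟨μ, hμ.1⟩, hμ, rfl⟩
    · rintro ⟨ν, hν, rfl⟩
      exact ⟨(ν : Measure _), hν, rfl⟩
  rw [himage]
  exact isCompact_setOf_coe_mem_MSet.image
    (ProbabilityMeasure.continuous_integral_of_finiteDimensional hf)

lemma integral_affine_of_mem_MSet {F : Type*} [NormedAddCommGroup F] [NormedSpace ℝ F]
    {m1 : Y0 × X → F →L[ℝ] E} (hm1 : Continuous m1) {m2 : Y1 × Y0 × X → E}
    (hm2 : Continuous m2) {μ : Measure (Y1 × Y0 × X)} (hμ : μ ∈ MSet μ1X μ0X) (θ : F) :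
    ∫ p, m1 (p.2.1, p.2.2) θ + m2 p ∂μ = (∫ q, m1 q ∂μ0X) θ + ∫ p, m2 p ∂μ := by
  obtain ⟨hμP, -, hμ0⟩ := hμ
  have : IsProbabilityMeasure μ0X := hμ0 ▸ Measure.isProbabilityMeasure_map (by fun_prop)
  have hm1θ : Continuous fun q => m1 q θ := by fun_prop
  have hπ0 : Continuous fun p : Y1 × Y0 × X => (p.2.1, p.2.2) := by fun_prop
  have hint : Integrable (fun p : Y1 × Y0 × X => m1 (p.2.1, p.2.2) θ) μ :=
    (hm1θ.comp hπ0).integrable_of_hasCompactSupport (.of_compactSpace _)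
  rw [integral_add hint (hm2.integrable_of_hasCompactSupport (.of_compactSpace _)),
    ContinuousLinearMap.integral_apply (hm1.integrable_of_hasCompactSupport (.of_compactSpace _)),
    ← hμ0, integral_map hπ0.aemeasurable hm1θ.aestronglyMeasurable]

end MSet

theorem affine_identified_set_closed_convex_general
    {Y1 Y0 X : Type*}
    [MetricSpace Y1] [CompactSpace Y1] [MeasurableSpace Y1] [BorelSpace Y1]
    [MetricSpace Y0] [CompactSpace Y0] [MeasurableSpace Y0] [BorelSpace Y0]
    [MetricSpace X] [CompactSpace X] [MeasurableSpace X] [BorelSpace X]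
    (μ1X : Measure (Y1 × X)) (μ0X : Measure (Y0 × X))
    {k dθ : ℕ}
    (m1 : Y0 × X → (EuclideanSpace ℝ (Fin dθ) →L[ℝ] EuclideanSpace ℝ (Fin k)))
    (hm1 : Continuous m1)
    (m2 : Y1 × Y0 × X → EuclideanSpace ℝ (Fin k)) (hm2 : Continuous m2)
    (Θ : Set (EuclideanSpace ℝ (Fin dθ)))
    (hΘcomp : IsCompact Θ) (hΘconv : Convex ℝ Θ) :
    IsClosed {θ ∈ Θ | ∃ μ ∈ MSet μ1X μ0X, ∫ p, (m1 (p.2.1, p.2.2)) θ + m2 p ∂μ = 0} ∧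
      Convex ℝ {θ ∈ Θ | ∃ μ ∈ MSet μ1X μ0X, ∫ p, (m1 (p.2.1, p.2.2)) θ + m2 p ∂μ = 0} := by
  set A := ∫ q, m1 q ∂μ0X
  set C := (fun μ => ∫ p, m2 p ∂μ) '' MSet μ1X μ0X
  have hset : {θ ∈ Θ | ∃ μ ∈ MSet μ1X μ0X, ∫ p, (m1 (p.2.1, p.2.2)) θ + m2 p ∂μ = 0} =
      Θ ∩ (-A) ⁻¹' C := by
    ext θ
    refine and_congr_right fun _ => exists_congr fun μ => and_congr_right fun hμ => ?_
    rw [integral_affine_of_mem_MSet hm1 hm2 hμ, add_eq_zero_iff_eq_neg', neg_apply]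
  rw [hset]
  exact ⟨hΘcomp.isClosed.inter ((isCompact_image_integral_MSet hm2).isClosed.preimage
      (-A).continuous),
    hΘconv.inter ((convex_image_integral_MSet hm2).linear_preimage (-A).toLinearMap)⟩

/-- Theorem 2(ii): for affine moment functions, the identified set
`Θ_I = {θ ∈ Θ : ∃ μ ∈ M(μ1X, μ0X), ∫ (m1(y0,x) θ + m2(y1,y0,x)) dμ = 0}` is closed and convex,
for `Θ` compact, convex and with nonempty interior. -/
theorem affine_identified_set_closed_convex
    {Y1 Y0 X : Type*}
    [MetricSpace Y1] [CompactSpace Y1] [MeasurableSpace Y1] [BorelSpace Y1]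
    [MetricSpace Y0] [CompactSpace Y0] [MeasurableSpace Y0] [BorelSpace Y0]
    [MetricSpace X] [CompactSpace X] [MeasurableSpace X] [BorelSpace X]
    (μ1X : Measure (Y1 × X)) (μ0X : Measure (Y0 × X))
    [IsProbabilityMeasure μ1X] [IsProbabilityMeasure μ0X]
    (hmarg : μ1X.map Prod.snd = μ0X.map Prod.snd)
    {k dθ : ℕ}
    (m1 : Y0 × X → (EuclideanSpace ℝ (Fin dθ) →L[ℝ] EuclideanSpace ℝ (Fin k)))
    (hm1 : Continuous m1)
    (m2 : Y1 × Y0 × X → EuclideanSpace ℝ (Fin k)) (hm2 : Continuous m2)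
    (Θ : Set (EuclideanSpace ℝ (Fin dθ)))
    (hΘcomp : IsCompact Θ) (hΘconv : Convex ℝ Θ) (hΘint : (interior Θ).Nonempty) :
    IsClosed {θ ∈ Θ | ∃ μ ∈ MSet μ1X μ0X, ∫ p, (m1 (p.2.1, p.2.2)) θ + m2 p ∂μ = 0} ∧
      Convex ℝ {θ ∈ Θ | ∃ μ ∈ MSet μ1X μ0X, ∫ p, (m1 (p.2.1, p.2.2)) θ + m2 p ∂μ = 0} :=
  affine_identified_set_closed_convex_general μ1X μ0X m1 hm1 m2 hm2 Θ hΘcomp hΘconv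
end

section
/- Let Y1, Y0, X be compact metric spaces with Borel σ-algebras, μ1X and μ0X Borel probability measures on Y1 × X and Y0 × X with the same X-marginal, m1 : Y0 × X → (d_θ × d_θ real matrices) continuous, m2 : Y1 × Y0 × X → ℝ^{d_θ} continuous, Θ ⊆ ℝ^{d_θ}, and suppose the matrix A := ∫ m1 dμ0X is invertible. Define s(q) := − inf over μ ∈ M(μ1X, μ0X) of ∫ qᵀ A⁻¹ m2(y1, y0, x) dμ. Then {θ ∈ Θ : there exists μ ∈ M(μ1X, μ0X) with ∫ (m1(y0, x) θ + m2(y1, y0, x)) dμ = 0} = {θ ∈ Θ : for every q in the unit sphere of ℝ^{d_θ}, ⟨q, θ⟩ ≤ s(q)} (Lemma B.2 of the appendix). -/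
/-!
The moment condition `∫ (m1 θ + m2) dμ = 0` says exactly `θ = -A⁻¹ ∫ m2 dμ`, so the identified set
is `Θ ∩ S` with `S = {-A⁻¹ ∫ m2 dμ : μ ∈ M(μ1X, μ0X)}`, and `s(q)` is the support function
`sup_{s ∈ S} ⟨q, s⟩` of `S`. The set `S` is nonempty (glue `μ1X` and `μ0X` along their common
`X`-marginal, with `Y1` and `Y0` conditionally independent given `X`), convex (`M` is convex
and the integral is affine in `μ`) and compact (`M` is weakly closed in the compact space of
probability measures on `Y1 × Y0 × X`, and `μ ↦ ∫ m2 dμ` is weakly continuous). A nonempty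
compact convex set is the intersection of the half-spaces cut out by its support function.
-/

open MeasureTheory
open scoped RealInnerProductSpace

open ProbabilityTheory
open scoped ENNReal

theorem Continuous.integrable_of_compactSpace {α E : Type*} [TopologicalSpace α] [CompactSpace α]
    [MeasurableSpace α] [OpensMeasurableSpace α] [NormedAddCommGroup E] {f : α → E}
    (hf : Continuous f) (μ : Measure α) [IsFiniteMeasure μ] : Integrable f μ :=
  hf.integrable_of_hasCompactSupport (.of_compactSpace f)

theorem ContinuousLinearMap.apply_add_eq_zero_iff {E : Type*} [NormedAddCommGroup E]
    [NormedSpace ℝ E] {A B : E →L[ℝ] E} (h₁ : ∀ v, B (A v) = v) (h₂ : ∀ v, A (B v) = v)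
    (θ w : E) : A θ + w = 0 ↔ θ = -B w := by
  rw [add_eq_zero_iff_eq_neg, ← map_neg]
  exact ⟨fun h ↦ by rw [← h, h₁], fun h ↦ by rw [h, h₂]⟩

theorem MeasureTheory.ProbabilityMeasure.continuous_integral_continuousMap_of_finiteDimensional
    {Ω : Type*} [TopologicalSpace Ω] [CompactSpace Ω] [MeasurableSpace Ω] [OpensMeasurableSpace Ω]
    {E : Type*} [NormedAddCommGroup E] [NormedSpace ℝ E] [FiniteDimensional ℝ E] (f : C(Ω, E)) :
    Continuous fun P : ProbabilityMeasure Ω ↦ ∫ x, f x ∂P := by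
  let b := Module.finBasis ℝ E
  rw [← b.equivFunL.comp_continuous_iff, continuous_pi_iff]
  intro i
  let L : E →L[ℝ] ℝ := (ContinuousLinearMap.proj i).comp b.equivFunL.toContinuousLinearMap
  exact (ProbabilityMeasure.continuous_integral_continuousMap ((L : C(E, ℝ)).comp f)).congr
    fun P ↦ L.integral_comp_comm (f.continuous.integrable_of_compactSpace _)

theorem Convex.mem_iff_forall_inner_le_sSup {E : Type*} [NormedAddCommGroup E]
    [InnerProductSpace ℝ E] [CompleteSpace E] {S : Set E} (hconv : Convex ℝ S)
    (hclosed : IsClosed S) (hbdd : Bornology.IsBounded S) (hne : S.Nonempty) (θ : E) :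
    θ ∈ S ↔ ∀ q : E, ‖q‖ = 1 → ⟪q, θ⟫ ≤ sSup ((⟪q, ·⟫) '' S) := by
  obtain ⟨C, hC⟩ := hbdd.exists_norm_le
  have hbddAbove (q : E) (hq : ‖q‖ = 1) : BddAbove ((⟪q, ·⟫) '' S) := by
    refine ⟨C, Set.forall_mem_image.2 fun s hs ↦ ?_⟩
    calc ⟪q, s⟫ ≤ ‖q‖ * ‖s‖ := real_inner_le_norm q s
      _ ≤ C := by rw [hq, one_mul]; exact hC s hs
  refine ⟨fun hθ q hq ↦ le_csSup (hbddAbove q hq) ⟨θ, hθ, rfl⟩, fun h ↦ ?_⟩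
  by_contra hθ
  obtain ⟨f, u, hfS, hfθ⟩ := geometric_hahn_banach_closed_point hconv hclosed hθ
  set v := (InnerProductSpace.toDual ℝ E).symm f
  have hv (x : E) : ⟪v, x⟫ = f x := InnerProductSpace.toDual_symm_apply
  have hv₀ : v ≠ 0 := by
    rintro hv₀
    obtain ⟨s, hs⟩ := hne
    have := hfS s hs
    simp only [← hv, hv₀, inner_zero_left] at this hfθ
    linarith
  have hnorm : 0 < ‖v‖⁻¹ := inv_pos.2 (norm_pos_iff.2 hv₀)
  have hunit : ‖‖v‖⁻¹ • v‖ = 1 := by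
    rw [norm_smul, norm_inv, norm_norm, inv_mul_cancel₀ (norm_ne_zero_iff.2 hv₀)]
  have hsSup : sSup ((⟪‖v‖⁻¹ • v, ·⟫) '' S) ≤ ‖v‖⁻¹ * u :=
    csSup_le (hne.image _) <| Set.forall_mem_image.2 fun s hs ↦ by
      rw [real_inner_smul_left, hv]
      exact mul_le_mul_of_nonneg_left (hfS s hs).le hnorm.le
  have := calc ‖v‖⁻¹ * u < ‖v‖⁻¹ * f θ := mul_lt_mul_of_pos_left hfθ hnorm
    _ = ⟪‖v‖⁻¹ • v, θ⟫ := by rw [real_inner_smul_left, hv]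
    _ ≤ sSup ((⟪‖v‖⁻¹ • v, ·⟫) '' S) := h _ hunit
    _ ≤ ‖v‖⁻¹ * u := hsSup
  exact lt_irrefl _ this

theorem neg_sInf_integral_inner_eq_sSup_inner_integral_neg {Ω E : Type*} [MeasurableSpace Ω]
    [NormedAddCommGroup E] [InnerProductSpace ℝ E] [CompleteSpace E] {M : Set (Measure Ω)}
    {f : Ω → E} (hf : ∀ μ ∈ M, Integrable f μ) (q : E) :
    -sInf {r : ℝ | ∃ μ ∈ M, r = ∫ p, ⟪q, f p⟫ ∂μ} =
      sSup ((⟪q, ·⟫) '' ((fun μ ↦ ∫ p, -f p ∂μ) '' M)) := by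
  suffices {r : ℝ | ∃ μ ∈ M, r = ∫ p, ⟪q, f p⟫ ∂μ} = -((⟪q, ·⟫) '' ((fun μ ↦ ∫ p, -f p ∂μ) '' M)) by
    rw [this, Real.sInf_neg, neg_neg]
  ext r
  simp only [Set.mem_ofPred_eq, Set.mem_neg, Set.image_image, Set.mem_image]
  refine exists_congr fun μ ↦ and_congr_right fun hμ ↦ ?_
  rw [integral_neg, inner_neg_right, integral_inner (hf μ hμ), neg_inj, eq_comm]

theorem MeasureTheory.Measure.map_fst_compProd_condKernel_prod {X Y₁ Y₂ : Type*} [MeasurableSpace X]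
    [MeasurableSpace Y₁] [StandardBorelSpace Y₁] [Nonempty Y₁]
    [MeasurableSpace Y₂] [StandardBorelSpace Y₂] [Nonempty Y₂]
    (ρ₁ : Measure (X × Y₁)) (ρ₂ : Measure (X × Y₂)) [IsFiniteMeasure ρ₁] [IsFiniteMeasure ρ₂] :
    (ρ₁.fst ⊗ₘ (ρ₁.condKernel ×ₖ ρ₂.condKernel)).map (Prod.map id Prod.fst) = ρ₁ := by
  rw [← Measure.compProd_map measurable_fst, ← Kernel.fst_eq, Kernel.fst_prod, ρ₁.disintegrate]

theorem MeasureTheory.Measure.map_snd_compProd_condKernel_prod {X Y₁ Y₂ : Type*} [MeasurableSpace X]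
    [MeasurableSpace Y₁] [StandardBorelSpace Y₁] [Nonempty Y₁]
    [MeasurableSpace Y₂] [StandardBorelSpace Y₂] [Nonempty Y₂]
    (ρ₁ : Measure (X × Y₁)) (ρ₂ : Measure (X × Y₂)) [IsFiniteMeasure ρ₁] [IsFiniteMeasure ρ₂]
    (h : ρ₁.fst = ρ₂.fst) :
    (ρ₁.fst ⊗ₘ (ρ₁.condKernel ×ₖ ρ₂.condKernel)).map (Prod.map id Prod.snd) = ρ₂ := by
  rw [← Measure.compProd_map measurable_snd, ← Kernel.snd_eq, Kernel.snd_prod, h, ρ₂.disintegrate]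

section MSet

variable {Y1 Y0 X : Type*} [MeasurableSpace Y1] [MeasurableSpace Y0] [MeasurableSpace X]
  {μ1X : Measure (Y1 × X)} {μ0X : Measure (Y0 × X)}

theorem MSet_nonempty [StandardBorelSpace Y1] [StandardBorelSpace Y0]
    [IsProbabilityMeasure μ1X] [IsProbabilityMeasure μ0X]
    (hmarg : μ1X.map Prod.snd = μ0X.map Prod.snd) :
    (MSet μ1X μ0X).Nonempty := by
  have := nonempty_of_isProbabilityMeasure μ1X
  have := nonempty_of_isProbabilityMeasure μ0X
  have : Nonempty Y1 := ⟨(Classical.arbitrary (Y1 × X)).1⟩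
  have : Nonempty Y0 := ⟨(Classical.arbitrary (Y0 × X)).1⟩
  let ρ₁ := μ1X.map Prod.swap
  let ρ₀ := μ0X.map Prod.swap
  have : IsProbabilityMeasure ρ₁ := Measure.isProbabilityMeasure_map measurable_swap.aemeasurable
  have hfst : ρ₁.fst = ρ₀.fst := by simpa [ρ₁, ρ₀, Measure.snd] using hmarg
  let π := ρ₁.fst ⊗ₘ (ρ₁.condKernel ×ₖ ρ₀.condKernel)
  have he : Measurable fun p : X × Y1 × Y0 ↦ (p.2.1, p.2.2, p.1) := by fun_prop
  refine ⟨π.map fun p ↦ (p.2.1, p.2.2, p.1), Measure.isProbabilityMeasure_map he.aemeasurable,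
    ?_, ?_⟩
  · rw [Measure.map_map (by fun_prop) he]
    change π.map (Prod.swap ∘ Prod.map id Prod.fst) = μ1X
    rw [← Measure.map_map measurable_swap (by fun_prop),
      Measure.map_fst_compProd_condKernel_prod, Measure.map_map measurable_swap measurable_swap]
    simp
  · rw [Measure.map_map (by fun_prop) he]
    change π.map (Prod.swap ∘ Prod.map id Prod.snd) = μ0X
    rw [← Measure.map_map measurable_swap (by fun_prop),
      Measure.map_snd_compProd_condKernel_prod _ _ hfst,
      Measure.map_map measurable_swap measurable_swap]
    simp

theorem smul_add_smul_mem_MSet {μ ν : Measure (Y1 × Y0 × X)} (hμ : μ ∈ MSet μ1X μ0X)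
    (hν : ν ∈ MSet μ1X μ0X) {a b : ℝ≥0∞} (hab : a + b = 1) :
    a • μ + b • ν ∈ MSet μ1X μ0X := by
  obtain ⟨hμP, hμ₁, hμ₀⟩ := hμ
  obtain ⟨hνP, hν₁, hν₀⟩ := hν
  refine ⟨⟨by simp [hab]⟩, ?_, ?_⟩ <;>
    rw [Measure.map_add _ _ (by fun_prop), Measure.map_smul, Measure.map_smul]
  · rw [hμ₁, hν₁, ← add_smul, hab, one_smul]
  · rw [hμ₀, hν₀, ← add_smul, hab, one_smul]

theorem convex_integral_image_MSet {E : Type*} [NormedAddCommGroup E] [NormedSpace ℝ E]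
    {f : Y1 × Y0 × X → E} (hf : ∀ μ ∈ MSet μ1X μ0X, Integrable f μ) :
    Convex ℝ ((fun μ ↦ ∫ p, f p ∂μ) '' MSet μ1X μ0X) := by
  rintro _ ⟨μ, hμ, rfl⟩ _ ⟨ν, hν, rfl⟩ a b ha hb hab
  refine ⟨ENNReal.ofReal a • μ + ENNReal.ofReal b • ν,
    smul_add_smul_mem_MSet hμ hν (by rw [← ENNReal.ofReal_add ha hb, hab, ENNReal.ofReal_one]), ?_⟩
  dsimp only
  rw [integral_add_measure ((hf μ hμ).smul_measure ENNReal.ofReal_ne_top)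
      ((hf ν hν).smul_measure ENNReal.ofReal_ne_top),
    integral_smul_measure, integral_smul_measure, ENNReal.toReal_ofReal ha,
    ENNReal.toReal_ofReal hb]

theorem integral_comp_of_mem_MSet {E : Type*} [NormedAddCommGroup E] [NormedSpace ℝ E]
    {μ : Measure (Y1 × Y0 × X)} (hμ : μ ∈ MSet μ1X μ0X) {h : Y0 × X → E}
    (hh : AEStronglyMeasurable h μ0X) :
    ∫ p, h (p.2.1, p.2.2) ∂μ = ∫ y, h y ∂μ0X := by
  rw [← hμ.2.2] at hh ⊢
  exact (integral_map (by fun_prop) hh).symm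

theorem integral_apply_add_of_mem_MSet {E : Type*} [NormedAddCommGroup E] [NormedSpace ℝ E]
    [CompleteSpace E] {m1 : Y0 × X → E →L[ℝ] E} (hm1 : Integrable m1 μ0X)
    {m2 : Y1 × Y0 × X → E} {μ : Measure (Y1 × Y0 × X)} (hμ : μ ∈ MSet μ1X μ0X)
    (hm2 : Integrable m2 μ) (θ : E) :
    ∫ p, m1 (p.2.1, p.2.2) θ + m2 p ∂μ = (∫ y, m1 y ∂μ0X) θ + ∫ p, m2 p ∂μ := by
  have hm1θ : Integrable (fun y ↦ m1 y θ) μ0X := hm1.apply_continuousLinearMap θ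
  have hcomp : Integrable (fun p : Y1 × Y0 × X ↦ m1 (p.2.1, p.2.2) θ) μ := by
    rw [← hμ.2.2] at hm1θ
    exact hm1θ.comp_measurable (by fun_prop)
  rw [integral_add hcomp hm2, integral_comp_of_mem_MSet hμ hm1θ.aestronglyMeasurable,
    ContinuousLinearMap.integral_apply hm1]

end MSet

section Compactness

variable {Y1 Y0 X : Type*}
  [MetricSpace Y1] [MeasurableSpace Y1] [BorelSpace Y1]
  [MetricSpace Y0] [MeasurableSpace Y0] [BorelSpace Y0]
  [MetricSpace X] [MeasurableSpace X] [BorelSpace X]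
  (μ1X : Measure (Y1 × X)) (μ0X : Measure (Y0 × X))
  [IsProbabilityMeasure μ1X] [IsProbabilityMeasure μ0X]

theorem isClosed_setOf_mem_MSet [SecondCountableTopology Y1] [SecondCountableTopology Y0] :
    IsClosed {P : ProbabilityMeasure (Y1 × Y0 × X) | (P : Measure _) ∈ MSet μ1X μ0X} := by
  have h₁ : Continuous fun p : Y1 × Y0 × X ↦ (p.1, p.2.2) := by fun_prop
  have h₀ : Continuous fun p : Y1 × Y0 × X ↦ (p.2.1, p.2.2) := by fun_prop
  let ν₁ : ProbabilityMeasure (Y1 × X) := ⟨μ1X, inferInstance⟩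
  let ν₀ : ProbabilityMeasure (Y0 × X) := ⟨μ0X, inferInstance⟩
  have hset : {P : ProbabilityMeasure (Y1 × Y0 × X) | (P : Measure _) ∈ MSet μ1X μ0X} =
      {P | P.map h₁.aemeasurable = ν₁} ∩ {P | P.map h₀.aemeasurable = ν₀} := by
    ext P
    simp only [MSet, Set.mem_ofPred_eq, Set.mem_inter_iff,
      ← ProbabilityMeasure.toMeasure_injective.eq_iff, ProbabilityMeasure.toMeasure_map]
    exact and_iff_right P.prop
  rw [hset]
  exact (isClosed_eq (ProbabilityMeasure.continuous_map h₁) continuous_const).inter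
    (isClosed_eq (ProbabilityMeasure.continuous_map h₀) continuous_const)

theorem isCompact_integral_image_MSet [CompactSpace Y1] [CompactSpace Y0] [CompactSpace X]
    {E : Type*} [NormedAddCommGroup E] [NormedSpace ℝ E] [FiniteDimensional ℝ E]
    (f : C(Y1 × Y0 × X, E)) :
    IsCompact ((fun μ ↦ ∫ p, f p ∂μ) '' MSet μ1X μ0X) := by
  have hM : MSet μ1X μ0X =
      (↑) '' {P : ProbabilityMeasure (Y1 × Y0 × X) | (P : Measure _) ∈ MSet μ1X μ0X} := by
    ext μ
    exact ⟨fun hμ ↦ ⟨⟨μ, hμ.1⟩, hμ, rfl⟩, by rintro ⟨P, hP, rfl⟩; exact hP⟩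
  rw [hM, Set.image_image]
  exact (isClosed_setOf_mem_MSet μ1X μ0X).isCompact.image
    (ProbabilityMeasure.continuous_integral_continuousMap_of_finiteDimensional f)

end Compactness

/-- Lemma B.2: when `k = d_θ` and `A := ∫ m1 dμ0X` is invertible (with inverse `Ainv`), the
identified set can be rewritten as
`{θ ∈ Θ : ⟨q, θ⟩ ≤ s(q) for all q on the unit sphere}` where
`s(q) = − inf_{μ ∈ M(μ1X,μ0X)} ∫ qᵀ A⁻¹ m2 dμ`. -/
theorem identified_set_eq_support_constraints
    {Y1 Y0 X : Type*}
    [MetricSpace Y1] [CompactSpace Y1] [MeasurableSpace Y1] [BorelSpace Y1]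
    [MetricSpace Y0] [CompactSpace Y0] [MeasurableSpace Y0] [BorelSpace Y0]
    [MetricSpace X] [CompactSpace X] [MeasurableSpace X] [BorelSpace X]
    (μ1X : Measure (Y1 × X)) (μ0X : Measure (Y0 × X))
    [IsProbabilityMeasure μ1X] [IsProbabilityMeasure μ0X]
    (hmarg : μ1X.map Prod.snd = μ0X.map Prod.snd)
    {dθ : ℕ}
    (m1 : Y0 × X → (EuclideanSpace ℝ (Fin dθ) →L[ℝ] EuclideanSpace ℝ (Fin dθ)))
    (hm1 : Continuous m1)
    (m2 : Y1 × Y0 × X → EuclideanSpace ℝ (Fin dθ)) (hm2 : Continuous m2)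
    (Θ : Set (EuclideanSpace ℝ (Fin dθ)))
    (Ainv : EuclideanSpace ℝ (Fin dθ) →L[ℝ] EuclideanSpace ℝ (Fin dθ))
    (hAinv₁ : ∀ v, Ainv ((∫ q, m1 q ∂μ0X) v) = v)
    (hAinv₂ : ∀ v, (∫ q, m1 q ∂μ0X) (Ainv v) = v) :
    {θ ∈ Θ | ∃ μ ∈ MSet μ1X μ0X, ∫ p, (m1 (p.2.1, p.2.2)) θ + m2 p ∂μ = 0} =
      {θ ∈ Θ | ∀ q : EuclideanSpace ℝ (Fin dθ), ‖q‖ = 1 →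
        ⟪q, θ⟫ ≤ - sInf {r : ℝ | ∃ μ ∈ MSet μ1X μ0X, r = ∫ p, ⟪q, Ainv (m2 p)⟫ ∂μ}} := by
  let g : C(Y1 × Y0 × X, EuclideanSpace ℝ (Fin dθ)) := ⟨fun p ↦ -Ainv (m2 p), by fun_prop⟩
  let S := (fun μ ↦ ∫ p, g p ∂μ) '' MSet μ1X μ0X
  have hint {f : Y1 × Y0 × X → EuclideanSpace ℝ (Fin dθ)} (hf : Continuous f) :
      ∀ μ ∈ MSet μ1X μ0X, Integrable f μ := fun μ hμ ↦
    have := hμ.1; hf.integrable_of_compactSpace μ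
  have hmoment (θ) {μ} (hμ : μ ∈ MSet μ1X μ0X) :
      ∫ p, (m1 (p.2.1, p.2.2)) θ + m2 p ∂μ = 0 ↔ θ = ∫ p, g p ∂μ := by
    rw [integral_apply_add_of_mem_MSet (hm1.integrable_of_compactSpace μ0X) hμ (hint hm2 μ hμ),
      ContinuousLinearMap.apply_add_eq_zero_iff hAinv₁ hAinv₂,
      ← Ainv.integral_comp_comm (hint hm2 μ hμ), ← integral_neg]
    rfl
  have hS : IsCompact S := isCompact_integral_image_MSet μ1X μ0X g
  have hSconv : Convex ℝ S := convex_integral_image_MSet (hint g.continuous)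
  ext θ
  refine and_congr_right fun _ ↦ ?_
  simp only [neg_sInf_integral_inner_eq_sSup_inner_integral_neg
    (hint (f := fun p ↦ Ainv (m2 p)) (by fun_prop))]
  refine Iff.trans ?_ (hSconv.mem_iff_forall_inner_le_sSup hS.isClosed hS.isBounded
    ((MSet_nonempty hmarg).image _) θ)
  exact ⟨fun ⟨μ, hμ, h⟩ ↦ ⟨μ, hμ, ((hmoment θ hμ).1 h).symm⟩,
    fun ⟨μ, hμ, h⟩ ↦ ⟨μ, hμ, (hmoment θ hμ).2 h.symm⟩⟩
end

section
/- Let Y1, Y0, X be compact metric spaces with Borel σ-algebras, μ1X and μ0X Borel probability measures on Y1 × X and Y0 × X with the same X-marginal, m1 : Y0 × X → (d_θ × d_θ real matrices) continuous, m2 : Y1 × Y0 × X → ℝ^{d_θ} continuous, with A := ∫ m1 dμ0X invertible. Define s(q) := − inf over μ ∈ M(μ1X, μ0X) of ∫ qᵀ A⁻¹ m2(y1, y0, x) dμ, and let Θ_I := {θ ∈ ℝ^{d_θ} : there exists μ ∈ M(μ1X, μ0X) with ∫ (m1(y0, x) θ + m2(y1, y0, x)) dμ = 0}. Then for every q in the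 unit sphere of ℝ^{d_θ}, the support function of Θ_I at q equals s(q); that is, sup over θ ∈ Θ_I of ⟨q, θ⟩ = s(q) (Proposition 3). -/
/-!
For a coupling `μ ∈ M(μ1X, μ0X)` the moment condition is affine in `θ`: since `m1` only sees
the `(y0, x)`-marginal of `μ`, which is `μ0X`, it reads `A θ + E_μ[m2] = 0`. Its unique solution is
`θ_μ = -A⁻¹ E_μ[m2]`, so `Θ_I = {-A⁻¹ E_μ[m2] : μ ∈ M}` and `⟨q, θ_μ⟩ = -∫ qᵀ A⁻¹ m2 dμ`.
Hence the values of `⟨q, ·⟩` on `Θ_I` are exactly the negatives of the integrals defining `s(q)`,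
and `sup (-S) = -inf S`, an identity that holds for every set of reals under Mathlib's
conventions for `sSup`/`sInf`, so no nonemptiness or boundedness of `Θ_I` is needed.
-/

open MeasureTheory
open scoped RealInnerProductSpace

theorem integral_comp_apply_of_map_eq {α β F G : Type*} [MeasurableSpace α] [MeasurableSpace β]
    [NormedAddCommGroup F] [NormedSpace ℝ F] [NormedAddCommGroup G] [NormedSpace ℝ G]
    {μ : Measure α} {ν : Measure β} {π : α → β} (hπ : Measurable π) (hν : μ.map π = ν)
    {f : β → F →L[ℝ] G} (hf : Integrable f ν) (v : F) :
    ∫ a, f (π a) v ∂μ = (∫ b, f b ∂ν) v := by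
  subst hν
  rw [← integral_map hπ.aemeasurable (hf.apply_continuousLinearMap v).aestronglyMeasurable,
    ContinuousLinearMap.integral_apply hf]

theorem ContinuousLinearMap.add_eq_zero_iff_eq_neg_apply {E : Type*} [NormedAddCommGroup E]
    [NormedSpace ℝ E] {A Ainv : E →L[ℝ] E} (h₁ : ∀ v, Ainv (A v) = v) (h₂ : ∀ v, A (Ainv v) = v)
    {θ b : E} : A θ + b = 0 ↔ θ = -Ainv b := by
  constructor
  · intro h
    rw [← h₁ θ, eq_neg_of_add_eq_zero_left h, map_neg]
  · rintro rfl
    rw [map_neg, h₂, neg_add_cancel]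

section IdentifiedSet

variable {Y1 Y0 X E : Type*} [MeasurableSpace Y1] [MeasurableSpace Y0] [MeasurableSpace X]
  [NormedAddCommGroup E] [NormedSpace ℝ E]
  {μ1X : Measure (Y1 × X)} {μ0X : Measure (Y0 × X)}
  {m1 : Y0 × X → E →L[ℝ] E} {m2 : Y1 × Y0 × X → E}

variable (μ1X μ0X m1 m2) in
def identifiedSet : Set E :=
  {θ | ∃ μ ∈ MSet μ1X μ0X, ∫ p, m1 (p.2.1, p.2.2) θ + m2 p ∂μ = 0}

theorem integral_moment_eq {μ : Measure (Y1 × Y0 × X)} (hμ : μ ∈ MSet μ1X μ0X)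
    (hm1 : Integrable m1 μ0X) (hm2 : Integrable m2 μ) (θ : E) :
    ∫ p, m1 (p.2.1, p.2.2) θ + m2 p ∂μ = (∫ y, m1 y ∂μ0X) θ + ∫ p, m2 p ∂μ := by
  have hproj : Measurable (fun p : Y1 × Y0 × X => (p.2.1, p.2.2)) := by fun_prop
  have hm1μ : Integrable (fun p : Y1 × Y0 × X => m1 (p.2.1, p.2.2)) μ := by
    rw [← hμ.2.2] at hm1
    exact hm1.comp_measurable hproj
  rw [integral_add (hm1μ.apply_continuousLinearMap θ) hm2,
    integral_comp_apply_of_map_eq hproj hμ.2.2 hm1]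

theorem mem_identifiedSet_iff {Ainv : E →L[ℝ] E}
    (hAinv₁ : ∀ v, Ainv ((∫ y, m1 y ∂μ0X) v) = v) (hAinv₂ : ∀ v, (∫ y, m1 y ∂μ0X) (Ainv v) = v)
    (hm1 : Integrable m1 μ0X) (hm2 : ∀ μ ∈ MSet μ1X μ0X, Integrable m2 μ) {θ : E} :
    θ ∈ identifiedSet μ1X μ0X m1 m2 ↔ ∃ μ ∈ MSet μ1X μ0X, θ = -Ainv (∫ p, m2 p ∂μ) :=
  exists_congr fun μ => and_congr_right fun hμ => by
    rw [integral_moment_eq hμ hm1 (hm2 μ hμ),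
      ContinuousLinearMap.add_eq_zero_iff_eq_neg_apply hAinv₁ hAinv₂]

end IdentifiedSet

section SupportFunction

variable {Y1 Y0 X E : Type*} [MeasurableSpace Y1] [MeasurableSpace Y0] [MeasurableSpace X]
  [NormedAddCommGroup E] [InnerProductSpace ℝ E] [CompleteSpace E]
  {μ1X : Measure (Y1 × X)} {μ0X : Measure (Y0 × X)}
  {m1 : Y0 × X → E →L[ℝ] E} {m2 : Y1 × Y0 × X → E} {Ainv : E →L[ℝ] E}

theorem inner_image_identifiedSet
    (hAinv₁ : ∀ v, Ainv ((∫ y, m1 y ∂μ0X) v) = v) (hAinv₂ : ∀ v, (∫ y, m1 y ∂μ0X) (Ainv v) = v)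
    (hm1 : Integrable m1 μ0X) (hm2 : ∀ μ ∈ MSet μ1X μ0X, Integrable m2 μ) (q : E) :
    {r : ℝ | ∃ θ ∈ identifiedSet μ1X μ0X m1 m2, r = ⟪q, θ⟫} =
      -{r : ℝ | ∃ μ ∈ MSet μ1X μ0X, r = ∫ p, ⟪q, Ainv (m2 p)⟫ ∂μ} := by
  have integral_inner_eq : ∀ μ ∈ MSet μ1X μ0X,
      ∫ p, ⟪q, Ainv (m2 p)⟫ ∂μ = ⟪q, Ainv (∫ p, m2 p ∂μ)⟫ := fun μ hμ => by
    rw [integral_inner (Ainv.integrable_comp (hm2 μ hμ)), Ainv.integral_comp_comm (hm2 μ hμ)]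
  ext r
  simp only [mem_identifiedSet_iff hAinv₁ hAinv₂ hm1 hm2, Set.mem_neg, Set.mem_ofPred_eq]
  constructor
  · rintro ⟨_, ⟨μ, hμ, rfl⟩, rfl⟩
    exact ⟨μ, hμ, by rw [integral_inner_eq μ hμ, inner_neg_right, neg_neg]⟩
  · rintro ⟨μ, hμ, hr⟩
    exact ⟨_, ⟨μ, hμ, rfl⟩, by rw [inner_neg_right, ← integral_inner_eq μ hμ, ← hr, neg_neg]⟩

theorem sSup_inner_identifiedSet
    (hAinv₁ : ∀ v, Ainv ((∫ y, m1 y ∂μ0X) v) = v) (hAinv₂ : ∀ v, (∫ y, m1 y ∂μ0X) (Ainv v) = v)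
    (hm1 : Integrable m1 μ0X) (hm2 : ∀ μ ∈ MSet μ1X μ0X, Integrable m2 μ) (q : E) :
    sSup {r : ℝ | ∃ θ ∈ identifiedSet μ1X μ0X m1 m2, r = ⟪q, θ⟫} =
      -sInf {r : ℝ | ∃ μ ∈ MSet μ1X μ0X, r = ∫ p, ⟪q, Ainv (m2 p)⟫ ∂μ} := by
  rw [inner_image_identifiedSet hAinv₁ hAinv₂ hm1 hm2, Real.sSup_neg]

end SupportFunction

theorem support_function_of_identified_set_general
    {Y1 Y0 X : Type*}
    [MetricSpace Y1] [CompactSpace Y1] [MeasurableSpace Y1] [BorelSpace Y1]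
    [MetricSpace Y0] [CompactSpace Y0] [MeasurableSpace Y0] [BorelSpace Y0]
    [MetricSpace X] [CompactSpace X] [MeasurableSpace X] [BorelSpace X]
    (μ1X : Measure (Y1 × X)) (μ0X : Measure (Y0 × X))
    [IsProbabilityMeasure μ0X]
    {dθ : ℕ}
    (m1 : Y0 × X → (EuclideanSpace ℝ (Fin dθ) →L[ℝ] EuclideanSpace ℝ (Fin dθ)))
    (hm1 : Continuous m1)
    (m2 : Y1 × Y0 × X → EuclideanSpace ℝ (Fin dθ)) (hm2 : Continuous m2)
    (Ainv : EuclideanSpace ℝ (Fin dθ) →L[ℝ] EuclideanSpace ℝ (Fin dθ))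
    (hAinv₁ : ∀ v, Ainv ((∫ q, m1 q ∂μ0X) v) = v)
    (hAinv₂ : ∀ v, (∫ q, m1 q ∂μ0X) (Ainv v) = v) :
    ∀ q : EuclideanSpace ℝ (Fin dθ), ‖q‖ = 1 →
      sSup {r : ℝ | ∃ θ : EuclideanSpace ℝ (Fin dθ),
          (∃ μ ∈ MSet μ1X μ0X, ∫ p, (m1 (p.2.1, p.2.2)) θ + m2 p ∂μ = 0) ∧ r = ⟪q, θ⟫} =
        - sInf {r : ℝ | ∃ μ ∈ MSet μ1X μ0X, r = ∫ p, ⟪q, Ainv (m2 p)⟫ ∂μ} := by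
  intro q _
  have hm1_int : Integrable m1 μ0X := hm1.integrable_of_hasCompactSupport (.of_compactSpace _)
  have hm2_int : ∀ μ ∈ MSet μ1X μ0X, Integrable m2 μ := fun μ hμ =>
    have := hμ.1
    hm2.integrable_of_hasCompactSupport (.of_compactSpace _)
  exact sSup_inner_identifiedSet hAinv₁ hAinv₂ hm1_int hm2_int q

/-- Proposition 3: the support function of the identified set `Θ_I` at every unit direction `q`
equals `s(q) = − inf_{μ ∈ M(μ1X,μ0X)} ∫ qᵀ A⁻¹ m2 dμ`, where `A = ∫ m1 dμ0X` is invertible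
with inverse `Ainv`. -/
theorem support_function_of_identified_set
    {Y1 Y0 X : Type*}
    [MetricSpace Y1] [CompactSpace Y1] [MeasurableSpace Y1] [BorelSpace Y1]
    [MetricSpace Y0] [CompactSpace Y0] [MeasurableSpace Y0] [BorelSpace Y0]
    [MetricSpace X] [CompactSpace X] [MeasurableSpace X] [BorelSpace X]
    (μ1X : Measure (Y1 × X)) (μ0X : Measure (Y0 × X))
    [IsProbabilityMeasure μ1X] [IsProbabilityMeasure μ0X]
    (hmarg : μ1X.map Prod.snd = μ0X.map Prod.snd)
    {dθ : ℕ}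
    (m1 : Y0 × X → (EuclideanSpace ℝ (Fin dθ) →L[ℝ] EuclideanSpace ℝ (Fin dθ)))
    (hm1 : Continuous m1)
    (m2 : Y1 × Y0 × X → EuclideanSpace ℝ (Fin dθ)) (hm2 : Continuous m2)
    (Ainv : EuclideanSpace ℝ (Fin dθ) →L[ℝ] EuclideanSpace ℝ (Fin dθ))
    (hAinv₁ : ∀ v, Ainv ((∫ q, m1 q ∂μ0X) v) = v)
    (hAinv₂ : ∀ v, (∫ q, m1 q ∂μ0X) (Ainv v) = v) :
    ∀ q : EuclideanSpace ℝ (Fin dθ), ‖q‖ = 1 →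
      sSup {r : ℝ | ∃ θ : EuclideanSpace ℝ (Fin dθ),
          (∃ μ ∈ MSet μ1X μ0X, ∫ p, (m1 (p.2.1, p.2.2)) θ + m2 p ∂μ = 0) ∧ r = ⟪q, θ⟫} =
        - sInf {r : ℝ | ∃ μ ∈ MSet μ1X μ0X, r = ∫ p, ⟪q, Ainv (m2 p)⟫ ∂μ} :=
  support_function_of_identified_set_general μ1X μ0X m1 hm1 m2 hm2 Ainv hAinv₁ hAinv₂
end

section
/- Consider the demographic-disparity model: Y1 ∈ {0, 1} is a binary decision and Y0 ∈ {a_1, …, a_J} is a protected attribute with J classes. Let X be a standard Borel space, μ_X a probability measure on X, κ1 a kernel from X to probability measures on {0,1}, κ0 a kernel from X to probability measures on {a_1, …, a_J}, and let μ1X and μ0X be the induced joint laws on {0,1} × X and {a_1, …, a_J} × X. Then for θ = (θ_1, …, θ_J) ∈ [0,1]^J, there exists μ ∈ M(μ1X, μ0X) with θ_j · μ({(y1, y0, x) : y0 = a_j}) = μ({(y1, y0, x) : y1 = 1, y0 = a_j}) for every j = 1, …, J, if and only if for every t = (t_1, …, t_J) in the unit sphere of ℝ^J: Σ_{j=1}^J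 t_j θ_j μ0X({a_j} × X) ≤ ∫_X ∫₀¹ F⁻¹_{β(x)}(u) · F⁻¹_{δ_t(x)}(u) du dμ_X(x), where β(x) is the law on ℝ of the indicator 1{y1 = 1} under κ1(x), and δ_t(x) is the pushforward of κ0(x) under a_j ↦ t_j (Proposition 5: the identified set for the within-class approval probabilities). -/
/-!
Fix `x` and write `p = κ1 x {1}`, `q j = κ0 x {a_j}`. A coupling of `κ1 x` and `κ0 x` is
determined by `r j = P(y1 = 1, y0 = a_j ∣ x)`, which ranges over the polytope
`{0 ≤ r ≤ q, ∑ r = p}`. For a direction `t`, sort the classes so that `t` increases: by Abel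
summation, `∑ t_j r_j` is maximised by the greedy `r` that fills the classes with the largest
`t_j` first, and its value is `∫₀¹ F⁻¹_β F⁻¹_{δ_t}`, the comonotone coupling of `β(x)` and
`δ_t(x)`. Integrating in `x`, the right-hand side is the support function in direction `t` of
the set of vectors `(∫ r_j dμX)_j` realised by couplings, which is the convex hull of the
finitely many greedy vertices (one per ordering). By Hahn–Banach, `(θ_j μ0X({a_j} × X))_j` lies
in that hull iff all support inequalities hold. Couplings are glued from, and disintegrated
(Radon–Nikodym) into, measurable families `r`.
-/

open MeasureTheory ProbabilityTheory
open scoped RealInnerProductSpace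

/-- The quantile function of a probability measure `ν` on `ℝ`:
`F_ν⁻¹(u) = inf {y : F_ν(y) ≥ u}` where `F_ν(y) = ν((-∞, y])`. -/
noncomputable def quantile (ν : Measure ℝ) (u : ℝ) : ℝ :=
  sInf {y : ℝ | u ≤ (ν (Set.Iic y)).toReal}

open scoped ENNReal

namespace DemographicDisparity

open Finset

section PartialSum

variable {n : ℕ}

def partialSum (a : Fin n → ℝ) (k : ℕ) : ℝ :=
  ∑ i ∈ univ.filter (fun i : Fin n => (i : ℕ) < k), a i

@[simp]
lemma partialSum_zero (a : Fin n → ℝ) : partialSum a 0 = 0 := by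
  simp [partialSum]

lemma partialSum_succ (a : Fin n → ℝ) {k : ℕ} (hk : k < n) :
    partialSum a (k + 1) = partialSum a k + a ⟨k, hk⟩ := by
  have : univ.filter (fun i : Fin n => (i : ℕ) < k + 1) =
      insert ⟨k, hk⟩ (univ.filter (fun i : Fin n => (i : ℕ) < k)) := by
    ext i
    simp [Fin.ext_iff]
    omega
  rw [partialSum, this, sum_insert (by simp), add_comm]
  rfl

lemma partialSum_self (a : Fin n → ℝ) : partialSum a n = ∑ i, a i := by
  simp [partialSum]

lemma partialSum_sub (a b : Fin n → ℝ) (k : ℕ) :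
    partialSum (a - b) k = partialSum a k - partialSum b k := by
  simp [partialSum, sum_sub_distrib]

lemma partialSum_mono {a : Fin n → ℝ} (ha : 0 ≤ a) : Monotone (partialSum a) :=
  fun _ _ hkl => sum_le_sum_of_subset_of_nonneg
    (fun i hi => by simp only [mem_filter, mem_univ, true_and] at hi ⊢; omega)
    (fun i _ _ => ha i)

lemma partialSum_nonneg {a : Fin n → ℝ} (ha : 0 ≤ a) (k : ℕ) : 0 ≤ partialSum a k :=
  partialSum_zero a ▸ partialSum_mono ha k.zero_le

lemma sum_mul_nonneg_of_partialSum_nonpos {c d : Fin n → ℝ} (hc : Monotone c)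
    (hd : ∀ k ≤ n, partialSum d k ≤ 0) (hdn : ∑ i, d i = 0) : 0 ≤ ∑ i, c i * d i := by
  set c' : ℕ → ℝ := fun k => if h : k < n then c ⟨k, h⟩ else 0
  set S := partialSum d
  have hsum : ∑ i, c i * d i = ∑ k ∈ range n, c' k * (S (k + 1) - S k) := by
    rw [← Fin.sum_univ_eq_sum_range (fun k => c' k * (S (k + 1) - S k))]
    refine sum_congr rfl fun i _ => ?_
    simp [c', S, partialSum_succ d i.isLt]
  have hS : ∀ k, ∑ i ∈ range k, (S (i + 1) - S i) = S k := fun k => by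
    rw [sum_range_sub, show S 0 = 0 from partialSum_zero d, sub_zero]
  have hparts := sum_range_by_parts c' (fun k => S (k + 1) - S k) n
  simp only [smul_eq_mul, hS] at hparts
  rw [hsum, hparts, show S n = 0 from (partialSum_self d).trans hdn, mul_zero, zero_sub,
    neg_nonneg]
  refine sum_nonpos fun i hi => ?_
  have hi : i + 1 < n := by rw [mem_range] at hi; omega
  refine mul_nonpos_of_nonneg_of_nonpos ?_ (hd _ hi.le)
  simpa [c', hi, Nat.lt_of_succ_lt hi] using hc (Fin.mk_le_mk.mpr i.le_succ)

end PartialSum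

section Allocation

variable {ι : Type*} [Fintype ι]

/-- For `q j = P(y0 = a_j ∣ x)` and `p = P(y1 = 1 ∣ x)`, the possible values of
`j ↦ P(y1 = 1, y0 = a_j ∣ x)` under a coupling. -/
def allocations (q : ι → ℝ) (p : ℝ) : Set (ι → ℝ) :=
  Set.Icc 0 q ∩ {r | ∑ i, r i = p}

lemma convex_allocations (q : ι → ℝ) (p : ℝ) : Convex ℝ (allocations q p) := by
  refine (convex_Icc 0 q).inter
    fun r (hr : ∑ i, r i = p) s (hs : ∑ i, s i = p) a b _ _ hab => ?_
  simp only [Set.mem_ofPred_eq, Pi.add_apply, Pi.smul_apply, smul_eq_mul, sum_add_distrib,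
    ← mul_sum, hr, hs, ← add_mul, hab, one_mul]

end Allocation

section Greedy

variable {n : ℕ}

def greedyLevel (q : Fin n → ℝ) (p : ℝ) (τ : Equiv.Perm (Fin n)) (k : ℕ) : ℝ :=
  max (1 - p) (partialSum (q ∘ τ) k)

/-- Class `τ i` receives the length of `(1 - p, 1] ∩ (C i, C (i + 1)]`, where `C` are the partial
sums of `q` along `τ`: the mass `p` fills the classes that come last in `τ` up to capacity. -/
def greedy (q : Fin n → ℝ) (p : ℝ) (τ : Equiv.Perm (Fin n)) (j : Fin n) : ℝ :=
  greedyLevel q p τ (τ.symm j + 1) - greedyLevel q p τ (τ.symm j)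

variable {q : Fin n → ℝ} {p : ℝ} {τ : Equiv.Perm (Fin n)}

lemma greedyLevel_mono (hq : 0 ≤ q) : Monotone (greedyLevel q p τ) :=
  fun _ _ hkl => max_le_max le_rfl (partialSum_mono (fun i => hq (τ i)) hkl)

lemma greedyLevel_zero (hp : p ≤ 1) : greedyLevel q p τ 0 = 1 - p := by
  simp [greedyLevel, hp]

lemma greedyLevel_self (hq : ∑ i, q i = 1) (hp : 0 ≤ p) : greedyLevel q p τ n = 1 := by
  rw [greedyLevel, partialSum_self, Function.comp_def, Equiv.sum_comp, hq]
  exact max_eq_right (by linarith)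

lemma greedy_apply_perm (i : Fin n) :
    greedy q p τ (τ i) = greedyLevel q p τ (i + 1) - greedyLevel q p τ i := by
  simp [greedy]

lemma partialSum_greedy_comp {k : ℕ} (hk : k ≤ n) :
    partialSum (greedy q p τ ∘ τ) k = greedyLevel q p τ k - greedyLevel q p τ 0 := by
  induction k with
  | zero => simp
  | succ k ih =>
    rw [partialSum_succ _ (by omega), ih (by omega), Function.comp_apply, greedy_apply_perm]
    ring

lemma sum_greedy (hq : ∑ i, q i = 1) (hp : p ∈ Set.Icc 0 1) : ∑ j, greedy q p τ j = p := by
  rw [← Equiv.sum_comp τ, ← Function.comp_def, ← partialSum_self,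
    partialSum_greedy_comp le_rfl, greedyLevel_self hq hp.1, greedyLevel_zero hp.2]
  ring

lemma greedy_mem_allocations (hq : 0 ≤ q) (hq1 : ∑ i, q i = 1) (hp : p ∈ Set.Icc 0 1) :
    greedy q p τ ∈ allocations q p := by
  refine ⟨⟨fun j => sub_nonneg.mpr (greedyLevel_mono hq (Nat.le_succ _)), fun j => ?_⟩,
    sum_greedy hq1 hp⟩
  have hC := partialSum_succ (q ∘ τ) (τ.symm j).isLt
  simp only [Fin.eta, Function.comp_apply, Equiv.apply_symm_apply] at hC
  simp only [greedy, greedyLevel, hC]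
  exact (max_sub_max_le_max _ _ _ _).trans (by simpa using hq j)

/-- The partial sums of `greedy - r` along `τ` are nonpositive, so Abel summation against the
increasing `t ∘ τ` gives the inequality. -/
theorem sum_mul_le_sum_mul_greedy {t r : Fin n → ℝ} (hτ : Monotone (t ∘ τ))
    (hq1 : ∑ i, q i = 1) (hr : r ∈ allocations q p) :
    ∑ i, t i * r i ≤ ∑ i, t i * greedy q p τ i := by
  obtain ⟨⟨hr0, hrq⟩, hrp : ∑ i, r i = p⟩ := hr
  have hp : p ∈ Set.Icc 0 1 :=
    ⟨hrp ▸ sum_nonneg fun i _ => hr0 i, hrp ▸ hq1 ▸ sum_le_sum fun i _ => hrq i⟩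
  set d := greedy q p τ - r
  have hd : 0 ≤ ∑ i, (t ∘ τ) i * (d ∘ τ) i := by
    refine sum_mul_nonneg_of_partialSum_nonpos hτ (fun k hk => ?_) ?_
    · have hqr : partialSum ((q - r) ∘ τ) k ≤ 1 - p := by
        calc partialSum ((q - r) ∘ τ) k ≤ partialSum ((q - r) ∘ τ) n :=
              partialSum_mono (fun i => sub_nonneg.mpr (hrq (τ i))) hk
          _ = 1 - p := by
            rw [partialSum_self, Function.comp_def, Equiv.sum_comp τ (q - r)]
            simp [sum_sub_distrib, hq1, hrp]
      have hr := partialSum_nonneg (a := r ∘ τ) (fun i => hr0 (τ i)) k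
      rw [show d ∘ τ = greedy q p τ ∘ τ - r ∘ τ from rfl, partialSum_sub,
        partialSum_greedy_comp hk, greedyLevel_zero hp.2, greedyLevel]
      rw [show (q - r) ∘ τ = q ∘ τ - r ∘ τ from rfl, partialSum_sub] at hqr
      rcases max_cases (1 - p) (partialSum (q ∘ τ) k) with ⟨h, _⟩ | ⟨h, _⟩ <;> rw [h] <;>
        linarith
    · rw [Function.comp_def, Equiv.sum_comp τ d]
      simp [d, sum_sub_distrib, sum_greedy hq1 hp, hrp]
  rw [show ∑ i, (t ∘ τ) i * (d ∘ τ) i = ∑ i, t i * d i from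
    Equiv.sum_comp τ (fun i => t i * d i)] at hd
  simpa [d, mul_sub, sum_sub_distrib] using hd

end Greedy

section Quantile

lemma quantile_eq_of_isLeast {ν : Measure ℝ} {u y : ℝ}
    (h : IsLeast {y | u ≤ ν.real (Set.Iic y)} y) : quantile ν u = y :=
  h.csInf_eq

lemma exists_lt_le_succ {α : Type*} [LinearOrder α] {f : ℕ → α} {u : α} {n : ℕ}
    (h0 : f 0 < u) (hn : u ≤ f n) : ∃ k < n, f k < u ∧ u ≤ f (k + 1) := by
  induction n with
  | zero => exact absurd (h0.trans_le hn) (lt_irrefl _)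
  | succ n ih =>
    rcases le_or_gt u (f n) with h | h
    · obtain ⟨k, hk, hku⟩ := ih h
      exact ⟨k, by omega, hku⟩
    · exact ⟨n, by omega, h, hn⟩

variable {n : ℕ} (m : Measure (Fin n)) [IsFiniteMeasure m]

lemma measureReal_map_Iic (f : Fin n → ℝ) (τ : Equiv.Perm (Fin n)) (y : ℝ) :
    (m.map f).real (Set.Iic y) = ∑ i with f (τ i) ≤ y, m.real {τ i} := by
  rw [map_measureReal_apply (measurable_of_finite f) measurableSet_Iic, sum_filter,
    Equiv.sum_comp τ (fun j => if f j ≤ y then m.real {j} else 0), ← sum_filter,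
    sum_measureReal_singleton]
  congr 1
  ext
  simp

lemma quantile_map_eq {f : Fin n → ℝ} {τ : Equiv.Perm (Fin n)} (hτ : Monotone (f ∘ τ))
    {k : ℕ} (hk : k < n) {u : ℝ}
    (hu : u ∈ Set.Ioc (partialSum (fun i => m.real {τ i}) k)
      (partialSum (fun i => m.real {τ i}) (k + 1))) :
    quantile (m.map f) u = f (τ ⟨k, hk⟩) := by
  refine quantile_eq_of_isLeast ⟨?_, fun y (hy : u ≤ _) => ?_⟩
  · refine hu.2.trans ?_
    rw [measureReal_map_Iic m f τ]
    refine sum_le_sum_of_subset_of_nonneg (fun i hi => ?_) (fun _ _ _ => measureReal_nonneg)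
    simp only [mem_filter, Finset.mem_univ, true_and] at hi ⊢
    exact hτ (Fin.mk_le_mk.mpr (by omega) : i ≤ ⟨k, hk⟩)
  · by_contra! hy'
    refine (hu.1.trans_le hy).not_ge ?_
    rw [measureReal_map_Iic m f τ]
    refine sum_le_sum_of_subset_of_nonneg (fun i hi => ?_) (fun _ _ _ => measureReal_nonneg)
    simp only [mem_filter, Finset.mem_univ, true_and] at hi ⊢
    by_contra! hki
    exact (hi.trans_lt hy').not_ge (hτ (Fin.mk_le_mk.mpr hki : (⟨k, hk⟩ : Fin n) ≤ i))

end Quantile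

section Binary

lemma sum_measureReal_singleton_eq_one {n : ℕ} (m : Measure (Fin n)) [IsProbabilityMeasure m] :
    ∑ i, m.real {i} = 1 := by
  simp

variable (m : Measure (Fin 2)) [IsProbabilityMeasure m]

lemma measureReal_zero_eq_one_sub : m.real {0} = 1 - m.real {1} := by
  have h := sum_measureReal_singleton_eq_one m
  rw [Fin.sum_univ_two] at h
  linarith

lemma monotone_indicator_one :
    Monotone ((fun y : Fin 2 => if y = 1 then (1 : ℝ) else 0) ∘ Equiv.refl (Fin 2)) := by
  intro a b hab
  fin_cases a <;> fin_cases b <;> simp_all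

lemma partialSum_one_measureReal :
    partialSum (fun i => m.real {Equiv.refl (Fin 2) i}) 1 = 1 - m.real {1} := by
  rw [partialSum_succ _ (by norm_num), partialSum_zero, zero_add]
  exact measureReal_zero_eq_one_sub m

lemma quantile_map_indicator_eq_zero {u : ℝ} (hu0 : 0 < u) (hu : u ≤ 1 - m.real {1}) :
    quantile (m.map fun y : Fin 2 => if y = 1 then (1 : ℝ) else 0) u = 0 := by
  rw [quantile_map_eq m monotone_indicator_one (k := 0) (by norm_num)
    ⟨by simpa using hu0, by rwa [partialSum_one_measureReal]⟩]
  simp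

lemma quantile_map_indicator_eq_one {u : ℝ} (hu : 1 - m.real {1} < u) (hu1 : u ≤ 1) :
    quantile (m.map fun y : Fin 2 => if y = 1 then (1 : ℝ) else 0) u = 1 := by
  have h2 : partialSum (fun i => m.real {Equiv.refl (Fin 2) i}) 2 = 1 := by
    simpa using partialSum_self (fun i => m.real {i})
  rw [quantile_map_eq m monotone_indicator_one (k := 1) (by norm_num)
    ⟨by rwa [partialSum_one_measureReal], by rwa [h2]⟩]
  rfl

end Binary

section QuantileProduct

variable {n : ℕ} (m1 : Measure (Fin 2)) [IsProbabilityMeasure m1]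
  (m0 : Measure (Fin n)) [IsProbabilityMeasure m0] {t : Fin n → ℝ} {τ : Equiv.Perm (Fin n)}

lemma quantile_mul_quantile_eq (hτ : Monotone (t ∘ τ)) {u : ℝ} (hu : u ∈ Set.Ioc 0 1) :
    quantile (m1.map fun y : Fin 2 => if y = 1 then (1 : ℝ) else 0) u *
        quantile (m0.map t) u =
      ∑ i : Fin n, (Set.Ioc (greedyLevel (fun j => m0.real {j}) (m1.real {1}) τ i)
        (greedyLevel (fun j => m0.real {j}) (m1.real {1}) τ (i + 1))).indicator
          (fun _ => t (τ i)) u := by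
  set p := m1.real {1}
  have hp : p ∈ Set.Icc 0 1 := ⟨measureReal_nonneg, measureReal_le_one⟩
  set M := greedyLevel (fun j => m0.real {j}) p τ
  have hM : Monotone M := greedyLevel_mono fun j => measureReal_nonneg
  rcases le_or_gt u (1 - p) with hlow | hhigh
  · rw [quantile_map_indicator_eq_zero m1 hu.1 hlow, zero_mul]
    refine (sum_eq_zero fun i _ => Set.indicator_of_notMem (fun h => ?_) _).symm
    exact (hlow.trans (le_max_left _ _)).not_gt h.1
  · rw [quantile_map_indicator_eq_one m1 hhigh hu.2, one_mul]
    have hM0 : M 0 = 1 - p := greedyLevel_zero hp.2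
    have hMn : M n = 1 := greedyLevel_self (sum_measureReal_singleton_eq_one m0) hp.1
    obtain ⟨k, hk, hku, hukM⟩ :=
      exists_lt_le_succ (f := M) (hM0 ▸ hhigh) (hMn ▸ hu.2 : u ≤ M n)
    have hC : u ∈ Set.Ioc (partialSum (fun i => m0.real {τ i}) k)
        (partialSum (fun i => m0.real {τ i}) (k + 1)) :=
      ⟨(le_max_right _ _).trans_lt hku, (le_max_iff.mp hukM).resolve_left hhigh.not_ge⟩
    rw [quantile_map_eq m0 hτ hk hC, sum_eq_single ⟨k, hk⟩]
    · exact (Set.indicator_of_mem (show u ∈ Set.Ioc (M k) (M (k + 1)) from ⟨hku, hukM⟩)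
        fun _ => t (τ ⟨k, hk⟩)).symm
    · intro i _ hi
      refine Set.indicator_of_notMem (fun h => ?_) _
      rcases lt_or_gt_of_ne (fun h' => hi (Fin.ext h') : (i : ℕ) ≠ k) with h' | h'
      · exact hku.not_ge (h.2.trans (hM (by omega)))
      · exact h.1.not_ge (hukM.trans (hM (by omega)))
    · simp

theorem setIntegral_quantile_mul_quantile (hτ : Monotone (t ∘ τ)) :
    ∫ u in Set.Ioo (0 : ℝ) 1,
        quantile (m1.map fun y : Fin 2 => if y = 1 then (1 : ℝ) else 0) u *
          quantile (m0.map t) u =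
      ∑ j, t j * greedy (fun j => m0.real {j}) (m1.real {1}) τ j := by
  set M := greedyLevel (fun j => m0.real {j}) (m1.real {1}) τ
  have hM : Monotone M := greedyLevel_mono fun j => measureReal_nonneg
  have hM0 : ∀ i, 0 ≤ M i := fun i =>
    (sub_nonneg.mpr measureReal_le_one).trans (le_max_left _ _)
  have hM1 : ∀ i ≤ n, M i ≤ 1 := fun i hi =>
    (hM hi).trans (greedyLevel_self (sum_measureReal_singleton_eq_one m0) measureReal_nonneg).le
  rw [← integral_Ioc_eq_integral_Ioo,
    setIntegral_congr_fun measurableSet_Ioc fun u hu => quantile_mul_quantile_eq m1 m0 hτ hu,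
    integral_finsetSum _ fun i _ => (integrable_const _).indicator measurableSet_Ioc,
    ← Equiv.sum_comp τ (fun j => t j * greedy _ _ τ j)]
  refine sum_congr rfl fun i _ => ?_
  rw [setIntegral_indicator measurableSet_Ioc,
    Set.inter_eq_right.mpr (Set.Ioc_subset_Ioc (hM0 i) (hM1 _ i.isLt)), setIntegral_const,
    Real.volume_real_Ioc_of_le (hM (Nat.le_succ i)), greedy_apply_perm, smul_eq_mul, mul_comm]

end QuantileProduct

section Coupling

variable {α β X : Type*} [MeasurableSpace α] [MeasurableSpace β] [MeasurableSpace X]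

lemma ext_of_singleton_prod [Countable α] [MeasurableSingletonClass α] {μ ν : Measure (α × X)}
    [IsFiniteMeasure μ]
    (h : ∀ a {A : Set X}, MeasurableSet A → μ ({a} ×ˢ A) = ν ({a} ×ˢ A)) : μ = ν := by
  refine Measure.ext_prod fun {s A} _ hA => ?_
  have hdisj : s.PairwiseDisjoint fun a => ({a} : Set α) ×ˢ A :=
    fun a _ b _ hab => Set.disjoint_left.mpr fun p hpa hpb => hab (hpa.1.symm.trans hpb.1)
  have hmeas : ∀ a ∈ s, MeasurableSet (({a} : Set α) ×ˢ A) :=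
    fun a _ => (measurableSet_singleton a).prod hA
  rw [← Set.biUnion_of_singleton s, Set.iUnion₂_prod_const,
    measure_biUnion s.to_countable hdisj hmeas, measure_biUnion s.to_countable hdisj hmeas]
  simp only [h _ hA]

lemma map_swap_compProd_apply_prod (μX : Measure X) [SFinite μX] (κ : Kernel X α)
    [IsSFiniteKernel κ] {s : Set α} {A : Set X} (hs : MeasurableSet s) (hA : MeasurableSet A) :
    (μX.compProd κ).map Prod.swap (s ×ˢ A) = ∫⁻ x in A, κ x s ∂μX := by
  rw [Measure.map_apply measurable_swap (hs.prod hA), Set.preimage_swap_prod,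
    Measure.compProd_apply_prod hA hs]

lemma measure_setOf_snd_fst_eq [MeasurableSingletonClass β] {μ1X : Measure (α × X)}
    {μ0X : Measure (β × X)} {μ : Measure (α × β × X)} (hμ : μ ∈ MSet μ1X μ0X) (b : β) :
    μ {p | p.2.1 = b} = μ0X {q | q.1 = b} := by
  rw [← hμ.2.2, Measure.map_apply (by fun_prop)
    (show MeasurableSet {q : β × X | q.1 = b} from measurable_fst (measurableSet_singleton b))]
  rfl

variable [MeasurableSingletonClass α] [MeasurableSingletonClass β]

lemma measure_prod_prod_eq_sum (μ : Measure (α × β × X)) (s : Finset α) (t : Finset β)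
    {A : Set X} (hA : MeasurableSet A) :
    μ (↑s ×ˢ ↑t ×ˢ A) = ∑ a ∈ s, ∑ b ∈ t, μ ({a} ×ˢ {b} ×ˢ A) := by
  rw [← sum_product' (f := fun a b => μ ({a} ×ˢ {b} ×ˢ A)), ← measure_biUnion_finset]
  · congr 1
    ext ⟨a, b, x⟩
    simp [and_assoc]
  · rintro ⟨a, b⟩ - ⟨a', b'⟩ - hne
    refine Set.disjoint_left.mpr fun p hp hp' => hne ?_
    simp only [Set.mem_prod, Set.mem_singleton_iff] at hp hp'
    rw [← hp.1, ← hp.2.1, ← hp'.1, ← hp'.2.1]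
  · exact fun p _ => (measurableSet_singleton _).prod ((measurableSet_singleton _).prod hA)

lemma map_fst_snd_snd_singleton_prod [Fintype β] (μ : Measure (α × β × X)) (a : α)
    {A : Set X} (hA : MeasurableSet A) :
    μ.map (fun p => (p.1, p.2.2)) ({a} ×ˢ A) = ∑ b, μ ({a} ×ˢ {b} ×ˢ A) := by
  rw [Measure.map_apply (by fun_prop) ((measurableSet_singleton a).prod hA),
    ← sum_singleton (fun a => ∑ b, μ ({a} ×ˢ {b} ×ˢ A)) a,
    ← measure_prod_prod_eq_sum μ _ _ hA]
  congr 1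
  ext
  simp

lemma map_snd_fst_snd_singleton_prod [Fintype α] (μ : Measure (α × β × X)) (b : β)
    {A : Set X} (hA : MeasurableSet A) :
    μ.map (fun p => (p.2.1, p.2.2)) ({b} ×ˢ A) = ∑ a, μ ({a} ×ˢ {b} ×ˢ A) := by
  rw [Measure.map_apply (by fun_prop) ((measurableSet_singleton b).prod hA),
    ← sum_congr rfl fun a _ => sum_singleton (fun b => μ ({a} ×ˢ {b} ×ˢ A)) b,
    ← measure_prod_prod_eq_sum μ _ _ hA]
  congr 1
  ext
  simp

variable [Fintype α] [Fintype β]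

lemma sum_map_withDensity_singleton_prod (μX : Measure X) [SFinite μX]
    (w : α → β → X → ℝ≥0∞) (a : α) (b : β) {A : Set X} (hA : MeasurableSet A) :
    (∑ a', ∑ b', (μX.withDensity (w a' b')).map (fun x => (a', b', x))) ({a} ×ˢ {b} ×ˢ A) =
      ∫⁻ x in A, w a b x ∂μX := by
  classical
  have hpre : ∀ a' b', (fun x : X => (a', b', x)) ⁻¹' ({a} ×ˢ {b} ×ˢ A) =
      if a' = a ∧ b' = b then A else ∅ := by
    intro a' b'
    split_ifs with h <;> ext x <;> simp_all
  have hmk : ∀ (a' : α) (b' : β), Measurable fun x : X => (a', b', x) := fun _ _ =>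
    measurable_const.prodMk (measurable_const.prodMk measurable_id)
  simp only [Measure.coe_finsetSum, Finset.sum_apply]
  simp_rw [Measure.map_apply (hmk _ _)
      ((measurableSet_singleton a).prod ((measurableSet_singleton b).prod hA)),
    hpre, withDensity_apply' _ (ite _ A ∅)]
  rw [sum_eq_single a, sum_eq_single b] <;> intros <;> simp_all

theorem exists_mem_MSet_of_density (μX : Measure X) [IsProbabilityMeasure μX]
    {κ1 : Kernel X α} [IsFiniteKernel κ1] {κ0 : Kernel X β} [IsMarkovKernel κ0]
    {w : α → β → X → ℝ≥0∞} (hw : ∀ a b, Measurable (w a b))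
    (h1 : ∀ a x, ∑ b, w a b x = κ1 x {a}) (h0 : ∀ b x, ∑ a, w a b x = κ0 x {b}) :
    ∃ μ ∈ MSet ((μX.compProd κ1).map Prod.swap) ((μX.compProd κ0).map Prod.swap),
      ∀ a b, μ {p | p.1 = a ∧ p.2.1 = b} = ∫⁻ x, w a b x ∂μX := by
  set μ : Measure (α × β × X) :=
    ∑ a, ∑ b, (μX.withDensity (w a b)).map (fun x => (a, b, x))
  have hcell : ∀ a b {A : Set X}, MeasurableSet A →
      μ ({a} ×ˢ {b} ×ˢ A) = ∫⁻ x in A, w a b x ∂μX :=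
    sum_map_withDensity_singleton_prod μX w
  have hmarg1 : μ.map (fun p => (p.1, p.2.2)) = (μX.compProd κ1).map Prod.swap := by
    refine (ext_of_singleton_prod fun a A hA => ?_).symm
    rw [map_swap_compProd_apply_prod μX κ1 (measurableSet_singleton a) hA,
      map_fst_snd_snd_singleton_prod μ a hA]
    simp [hcell _ _ hA, ← lintegral_finsetSum _ fun b _ => hw a b, h1]
  have hmarg0 : μ.map (fun p => (p.2.1, p.2.2)) = (μX.compProd κ0).map Prod.swap := by
    refine (ext_of_singleton_prod fun b A hA => ?_).symm
    rw [map_swap_compProd_apply_prod μX κ0 (measurableSet_singleton b) hA,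
      map_snd_fst_snd_singleton_prod μ b hA]
    simp [hcell _ _ hA, ← lintegral_finsetSum _ fun a _ => hw a b, h0]
  have hprob : IsProbabilityMeasure μ := (Measure.isProbabilityMeasure_map_iff
    (f := fun p => (p.2.1, p.2.2)) (by fun_prop)).mp
      (hmarg0 ▸ Measure.isProbabilityMeasure_map measurable_swap.aemeasurable)
  refine ⟨μ, ⟨hprob, hmarg1, hmarg0⟩, fun a b => ?_⟩
  rw [show {p : α × β × X | p.1 = a ∧ p.2.1 = b} = {a} ×ˢ {b} ×ˢ Set.univ by ext; simp,
    hcell a b MeasurableSet.univ, Measure.restrict_univ]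

lemma ae_sum_rnDeriv_eq {ι : Type*} (μX : Measure X) [SigmaFinite μX] {ρ : ι → Measure X}
    [∀ i, IsFiniteMeasure (ρ i)] (hac : ∀ i, ρ i ≪ μX) (s : Finset ι) {f : X → ℝ≥0∞}
    (hf : Measurable f) (h : ∀ A, MeasurableSet A → ∑ i ∈ s, ρ i A = ∫⁻ x in A, f x ∂μX) :
    ∀ᵐ x ∂μX, ∑ i ∈ s, (ρ i).rnDeriv μX x = f x :=
  ae_eq_of_forall_setLIntegral_eq_of_sigmaFinite
    (Finset.measurable_sum _ fun i _ => Measure.measurable_rnDeriv _ _) hf fun A hA _ => by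
      rw [lintegral_finsetSum _ fun i _ => Measure.measurable_rnDeriv _ _, ← h A hA]
      exact sum_congr rfl fun i _ => Measure.setLIntegral_rnDeriv (hac i) A

theorem exists_density_of_mem_MSet (μX : Measure X) [SigmaFinite μX]
    {κ1 : Kernel X α} [IsSFiniteKernel κ1] {κ0 : Kernel X β} [IsSFiniteKernel κ0]
    {μ : Measure (α × β × X)}
    (hμ : μ ∈ MSet ((μX.compProd κ1).map Prod.swap) ((μX.compProd κ0).map Prod.swap)) :
    ∃ w : α → β → X → ℝ≥0∞, (∀ a b, Measurable (w a b)) ∧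
      (∀ᵐ x ∂μX, (∀ a, ∑ b, w a b x = κ1 x {a}) ∧ ∀ b, ∑ a, w a b x = κ0 x {b}) ∧
      ∀ a b, μ {p | p.1 = a ∧ p.2.1 = b} = ∫⁻ x, w a b x ∂μX := by
  obtain ⟨hprob, h1, h0⟩ := hμ
  set ρ : α → β → Measure X := fun a b =>
    (μ.restrict ({a} ×ˢ {b} ×ˢ Set.univ)).map (fun p => p.2.2)
  have hρ : ∀ a b {A : Set X}, MeasurableSet A → ρ a b A = μ ({a} ×ˢ {b} ×ˢ A) := by
    intro a b A hA
    rw [Measure.map_apply (by fun_prop) hA, Measure.restrict_apply (hA.preimage (by fun_prop))]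
    congr 1
    ext
    simp [and_comm, and_assoc]
  have hrow : ∀ a {A : Set X}, MeasurableSet A →
      ∑ b, ρ a b A = ∫⁻ x in A, κ1 x {a} ∂μX :=
    fun a A hA => by
      rw [← map_swap_compProd_apply_prod μX κ1 (measurableSet_singleton a) hA, ← h1,
        map_fst_snd_snd_singleton_prod μ a hA]
      exact sum_congr rfl fun b _ => hρ a b hA
  have hcol : ∀ b {A : Set X}, MeasurableSet A →
      ∑ a, ρ a b A = ∫⁻ x in A, κ0 x {b} ∂μX :=
    fun b A hA => by
      rw [← map_swap_compProd_apply_prod μX κ0 (measurableSet_singleton b) hA, ← h0,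
        map_snd_fst_snd_singleton_prod μ b hA]
      exact sum_congr rfl fun a _ => hρ a b hA
  have hac : ∀ a b, ρ a b ≪ μX := fun a b => Measure.AbsolutelyContinuous.mk fun A hA hA0 =>
    le_antisymm ((single_le_sum (fun b _ => zero_le) (mem_univ b)).trans
      ((hrow a hA).trans (setLIntegral_measure_zero _ _ hA0)).le) zero_le
  refine ⟨fun a b => (ρ a b).rnDeriv μX, fun a b => Measure.measurable_rnDeriv _ _,
    Filter.eventually_and.mpr ⟨ae_all_iff.mpr fun a => ?_, ae_all_iff.mpr fun b => ?_⟩,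
    fun a b => ?_⟩
  · exact ae_sum_rnDeriv_eq μX (ρ := fun b => ρ a b) (fun b => hac a b) univ
      (κ1.measurable_coe (measurableSet_singleton a)) fun A hA => hrow a hA
  · exact ae_sum_rnDeriv_eq μX (ρ := fun a => ρ a b) (fun a => hac a b) univ
      (κ0.measurable_coe (measurableSet_singleton b)) fun A hA => hcol b hA
  · rw [Measure.lintegral_rnDeriv (hac a b), hρ a b MeasurableSet.univ]
    congr 1
    ext
    simp

end Coupling

section Separation

variable {E ι : Type*} [NormedAddCommGroup E] [InnerProductSpace ℝ E] [CompleteSpace E]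
  [Fintype ι] [Nonempty ι]

theorem exists_convex_weights_of_forall_inner_le (v : ι → E) {w : E}
    (h : ∀ t : E, ‖t‖ = 1 → ∃ i, ⟪t, w⟫ ≤ ⟪t, v i⟫) :
    ∃ W : ι → ℝ, (∀ i, 0 ≤ W i) ∧ ∑ i, W i = 1 ∧ ∑ i, W i • v i = w := by
  classical
  have hw : w ∈ convexHull ℝ (Set.range v) := by
    by_contra hw
    obtain ⟨f, u, hfv, hfw⟩ := geometric_hahn_banach_closed_point (convex_convexHull ℝ _)
      ((Set.finite_range v).isClosed_convexHull ℝ) hw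
    set t := (InnerProductSpace.toDual ℝ E).symm f
    have hf : ∀ y, f y = ⟪t, y⟫ := fun y => (InnerProductSpace.toDual_symm_apply).symm
    have hv : ∀ i, ⟪t, v i⟫ < ⟪t, w⟫ := fun i =>
      ((hf _).symm.trans_lt (hfv _ (subset_convexHull ℝ _ ⟨i, rfl⟩))).trans
        (hfw.trans_eq (hf w))
    obtain ⟨i₀⟩ := ‹Nonempty ι›
    have ht : t ≠ 0 := fun ht => by simpa [ht] using hv i₀
    obtain ⟨i, hi⟩ := h (‖t‖⁻¹ • t) (norm_smul_inv_norm ht)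
    rw [inner_smul_left, inner_smul_left] at hi
    exact (hv i).not_ge (le_of_mul_le_mul_left (by simpa using hi) (by simpa using ht))
  obtain ⟨κ, _, c, z, hc0, hc1, hz, hcz⟩ := mem_convexHull_iff_exists_fintype.mp hw
  choose σ hσ using hz
  refine ⟨fun i => ∑ k with σ k = i, c k, fun i => sum_nonneg fun k _ => hc0 k, ?_, ?_⟩
  · rw [sum_fiberwise univ σ c, hc1]
  · simp_rw [sum_smul]
    rw [← hcz, ← sum_fiberwise univ σ fun k => c k • z k]
    refine sum_congr rfl fun i _ => sum_congr rfl fun k hk => ?_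
    rw [← (mem_filter.mp hk).2, hσ]

end Separation

section Model

variable {J : ℕ} {X : Type*} [MeasurableSpace X]

def allocationsAt (κ1 : Kernel X (Fin 2)) (κ0 : Kernel X (Fin J)) (x : X) : Set (Fin J → ℝ) :=
  allocations (fun j => (κ0 x).real {j}) ((κ1 x).real {1})

def greedyAt (κ1 : Kernel X (Fin 2)) (κ0 : Kernel X (Fin J)) (τ : Equiv.Perm (Fin J)) (x : X) :
    Fin J → ℝ :=
  greedy (fun j => (κ0 x).real {j}) ((κ1 x).real {1}) τ

variable (μX : Measure X) [IsProbabilityMeasure μX]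
  (κ1 : Kernel X (Fin 2)) (κ0 : Kernel X (Fin J))

lemma measurable_greedyAt (τ : Equiv.Perm (Fin J)) (j : Fin J) :
    Measurable fun x => greedyAt κ1 κ0 τ x j := by
  have hq : ∀ i, Measurable fun x => (κ0 x).real {i} := fun i =>
    (κ0.measurable_coe (measurableSet_singleton i)).ennreal_toReal
  have hp : Measurable fun x => (κ1 x).real {1} :=
    (κ1.measurable_coe (measurableSet_singleton 1)).ennreal_toReal
  unfold greedyAt greedy greedyLevel partialSum
  fun_prop

variable [IsMarkovKernel κ0]

lemma integrable_of_ae_mem_allocations {r : Fin J → X → ℝ} (hr : ∀ j, Measurable (r j))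
    (halloc : ∀ᵐ x ∂μX, (fun j => r j x) ∈ allocationsAt κ1 κ0 x)
    (j : Fin J) : Integrable (r j) μX := by
  refine .of_bound (hr j).aestronglyMeasurable 1 ?_
  filter_upwards [halloc] with x ⟨⟨h0, hq⟩, _⟩
  rw [Real.norm_eq_abs, abs_of_nonneg (h0 j)]
  exact (hq j).trans measureReal_le_one

variable [IsMarkovKernel κ1]

lemma greedyAt_mem_allocations (τ : Equiv.Perm (Fin J)) (x : X) :
    greedyAt κ1 κ0 τ x ∈ allocationsAt κ1 κ0 x :=
  greedy_mem_allocations (fun _ => measureReal_nonneg) (sum_measureReal_singleton_eq_one _)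
    ⟨measureReal_nonneg, measureReal_le_one⟩

lemma integrable_greedyAt (τ : Equiv.Perm (Fin J)) (j : Fin J) :
    Integrable (fun x => greedyAt κ1 κ0 τ x j) μX :=
  integrable_of_ae_mem_allocations μX κ1 κ0 (measurable_greedyAt κ1 κ0 τ)
    (.of_forall (greedyAt_mem_allocations κ1 κ0 τ)) j

theorem integral_setIntegral_quantile_mul_quantile {t : Fin J → ℝ} {τ : Equiv.Perm (Fin J)}
    (hτ : Monotone (t ∘ τ)) :
    ∫ x, ∫ u in Set.Ioo (0 : ℝ) 1,
        quantile ((κ1 x).map fun y : Fin 2 => if y = 1 then (1 : ℝ) else 0) u *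
          quantile ((κ0 x).map t) u ∂volume ∂μX =
      ∑ j, t j * ∫ x, greedyAt κ1 κ0 τ x j ∂μX := by
  rw [integral_congr_ae (g := fun x => ∑ j, t j * greedyAt κ1 κ0 τ x j)
      (.of_forall fun x => setIntegral_quantile_mul_quantile (κ1 x) (κ0 x) hτ),
    integral_finsetSum _ fun j _ => (integrable_greedyAt μX κ1 κ0 τ j).const_mul _]
  simp_rw [integral_const_mul]

theorem sum_mul_integral_le_sum_mul_integral_greedyAt {r : Fin J → X → ℝ}
    (hr : ∀ j, Measurable (r j))
    (halloc : ∀ᵐ x ∂μX, (fun j => r j x) ∈ allocationsAt κ1 κ0 x)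
    {t : Fin J → ℝ} {τ : Equiv.Perm (Fin J)} (hτ : Monotone (t ∘ τ)) :
    ∑ j, t j * ∫ x, r j x ∂μX ≤ ∑ j, t j * ∫ x, greedyAt κ1 κ0 τ x j ∂μX := by
  have hint : ∀ {r : Fin J → X → ℝ}, (∀ j, Integrable (r j) μX) →
      ∑ j, t j * ∫ x, r j x ∂μX = ∫ x, ∑ j, t j * r j x ∂μX := fun hr => by
    rw [integral_finsetSum _ fun j _ => (hr j).const_mul _]
    simp_rw [integral_const_mul]
  have hg := integrable_greedyAt μX κ1 κ0 τ
  have hr' := integrable_of_ae_mem_allocations μX κ1 κ0 hr halloc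
  rw [hint hr', hint hg]
  refine integral_mono_ae (integrable_finsetSum _ fun j _ => (hr' j).const_mul _)
    (integrable_finsetSum _ fun j _ => (hg j).const_mul _) ?_
  filter_upwards [halloc] with x hx
  exact sum_mul_le_sum_mul_greedy hτ (sum_measureReal_singleton_eq_one _) hx

theorem exists_allocation_of_forall_le {c : Fin J → ℝ}
    (h : ∀ t : EuclideanSpace ℝ (Fin J), ‖t‖ = 1 →
      ∑ j, t j * c j ≤ ∫ x, ∫ u in Set.Ioo (0 : ℝ) 1,
        quantile ((κ1 x).map fun y : Fin 2 => if y = 1 then (1 : ℝ) else 0) u *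
          quantile ((κ0 x).map fun j => t j) u ∂volume ∂μX) :
    ∃ r : Fin J → X → ℝ, (∀ j, Measurable (r j)) ∧
      (∀ x, (fun j => r j x) ∈ allocationsAt κ1 κ0 x) ∧
      ∀ j, ∫ x, r j x ∂μX = c j := by
  set V : Equiv.Perm (Fin J) → EuclideanSpace ℝ (Fin J) := fun τ =>
    WithLp.toLp 2 fun j => ∫ x, greedyAt κ1 κ0 τ x j ∂μX
  have hinner : ∀ t y : EuclideanSpace ℝ (Fin J), ⟪t, y⟫ = ∑ j, t j * y j := fun t y => by
    simp [PiLp.inner_apply, mul_comm]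
  obtain ⟨W, hW0, hW1, hWV⟩ := exists_convex_weights_of_forall_inner_le V (w := WithLp.toLp 2 c)
    fun t ht => ⟨Tuple.sort t, by
      simpa [hinner, V, integral_setIntegral_quantile_mul_quantile μX κ1 κ0
        (Tuple.monotone_sort fun j => t j)] using h t ht⟩
  refine ⟨fun j x => ∑ τ, W τ * greedyAt κ1 κ0 τ x j,
    fun j => Finset.measurable_sum _ fun τ _ => (measurable_greedyAt κ1 κ0 τ j).const_mul _,
    fun x => ?_, fun j => ?_⟩
  · have hsum :
        (fun j => ∑ τ, W τ * greedyAt κ1 κ0 τ x j) = ∑ τ, W τ • greedyAt κ1 κ0 τ x := by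
      ext
      simp [Finset.sum_apply]
    rw [hsum]
    exact (convex_allocations _ _).sum_mem (fun τ _ => hW0 τ) hW1
      fun τ _ => greedyAt_mem_allocations κ1 κ0 τ x
  · rw [integral_finsetSum _ fun τ _ => (integrable_greedyAt μX κ1 κ0 τ j).const_mul _]
    simpa [integral_const_mul, V] using congrArg (· j) hWV

theorem exists_allocation_of_mem_MSet {μ : Measure (Fin 2 × Fin J × X)}
    (hμ : μ ∈ MSet ((μX.compProd κ1).map Prod.swap) ((μX.compProd κ0).map Prod.swap)) :
    ∃ r : Fin J → X → ℝ, (∀ j, Measurable (r j)) ∧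
      (∀ᵐ x ∂μX, (fun j => r j x) ∈ allocationsAt κ1 κ0 x) ∧
      ∀ j, (μ {p | p.1 = 1 ∧ p.2.1 = j}).toReal = ∫ x, r j x ∂μX := by
  obtain ⟨w, hw, hae, hμw⟩ := exists_density_of_mem_MSet μX hμ
  have hle : ∀ᵐ x ∂μX, ∀ j, w 1 j x ≤ κ0 x {j} := by
    filter_upwards [hae] with x hx j
    rw [← hx.2 j, Fin.sum_univ_two]
    exact le_add_self
  refine ⟨fun j x => (w 1 j x).toReal, fun j => (hw 1 j).ennreal_toReal, ?_, fun j => ?_⟩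
  · filter_upwards [hae, hle] with x hx hle
    refine ⟨⟨fun j => ENNReal.toReal_nonneg,
      fun j => ENNReal.toReal_mono (by finiteness) (hle j)⟩, ?_⟩
    change ∑ j, (w 1 j x).toReal = (κ1 x {1}).toReal
    rw [← ENNReal.toReal_sum fun j _ => ne_top_of_le_ne_top (by finiteness) (hle j), hx.1 1]
  · refine (hμw 1 j).symm ▸ (integral_toReal (hw 1 j).aemeasurable ?_).symm
    filter_upwards [hle] with x hx
    exact (hx j).trans_lt (measure_lt_top _ _)

theorem exists_mem_MSet_of_allocation {r : Fin J → X → ℝ} (hr : ∀ j, Measurable (r j))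
    (halloc : ∀ x, (fun j => r j x) ∈ allocationsAt κ1 κ0 x) :
    ∃ μ ∈ MSet ((μX.compProd κ1).map Prod.swap) ((μX.compProd κ0).map Prod.swap),
      ∀ j, (μ {p | p.1 = 1 ∧ p.2.1 = j}).toReal = ∫ x, r j x ∂μX := by
  set w : Fin 2 → Fin J → X → ℝ≥0∞ := fun b j x =>
    ENNReal.ofReal (if b = 1 then r j x else (κ0 x).real {j} - r j x)
  have hq : ∀ j, Measurable fun x => (κ0 x).real {j} := fun j =>
    (κ0.measurable_coe (measurableSet_singleton j)).ennreal_toReal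
  have hrow : ∀ b x, ∑ j, w b j x = κ1 x {b} := by
    intro b x
    obtain ⟨⟨h0, hrq⟩, hp : ∑ j, r j x = (κ1 x).real {1}⟩ := halloc x
    rw [← ENNReal.ofReal_sum_of_nonneg fun j _ => ?_, ← ofReal_measureReal]
    · congr 1
      fin_cases b
      · simp [Finset.sum_sub_distrib, hp, measureReal_zero_eq_one_sub]
      · simpa using hp
    · split_ifs
      exacts [h0 j, sub_nonneg.mpr (hrq j)]
  have hcol : ∀ j x, ∑ b, w b j x = κ0 x {j} := by
    intro j x
    simp only [w, Fin.sum_univ_two, Fin.isValue, zero_ne_one, ↓reduceIte]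
    rw [← ENNReal.ofReal_add (sub_nonneg.mpr ((halloc x).1.2 j)) ((halloc x).1.1 j),
      sub_add_cancel, ofReal_measureReal]
  obtain ⟨μ, hμ, hμw⟩ :=
    exists_mem_MSet_of_density μX (fun b j => by simp only [w]; split_ifs <;> fun_prop) hrow hcol
  refine ⟨μ, hμ, fun j => ?_⟩
  simp only [hμw, w, ↓reduceIte]
  rw [← ofReal_integral_eq_lintegral_ofReal
      (integrable_of_ae_mem_allocations μX κ1 κ0 hr (.of_forall halloc) j)
      (.of_forall fun x => ((halloc x).1.1 j)),
    ENNReal.toReal_ofReal (integral_nonneg fun x => (halloc x).1.1 j)]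

end Model

end DemographicDisparity

theorem demographic_disparity_identified_set_general
    {J : ℕ} {X : Type*} [MeasurableSpace X]
    (μX : Measure X) [IsProbabilityMeasure μX]
    (κ1 : Kernel X (Fin 2)) [IsMarkovKernel κ1]
    (κ0 : Kernel X (Fin J)) [IsMarkovKernel κ0]
    (μ1X : Measure (Fin 2 × X)) (μ0X : Measure (Fin J × X))
    (hκ1 : (μX.compProd κ1).map Prod.swap = μ1X)
    (hκ0 : (μX.compProd κ0).map Prod.swap = μ0X)
    (θ : EuclideanSpace ℝ (Fin J)) :
    (∃ μ ∈ MSet μ1X μ0X, ∀ j : Fin J,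
        θ j * (μ {p : Fin 2 × Fin J × X | p.2.1 = j}).toReal =
          (μ {p : Fin 2 × Fin J × X | p.1 = 1 ∧ p.2.1 = j}).toReal) ↔
      ∀ t : EuclideanSpace ℝ (Fin J), ‖t‖ = 1 →
        (∑ j : Fin J, t j * θ j * (μ0X {q : Fin J × X | q.1 = j}).toReal) ≤
          ∫ x, ∫ u in Set.Ioo (0:ℝ) 1,
            quantile ((κ1 x).map (fun y1 : Fin 2 => if y1 = 1 then (1:ℝ) else 0)) u *
              quantile ((κ0 x).map (fun j : Fin J => t j)) u ∂volume ∂μX := by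
  subst hκ1 hκ0
  constructor
  · rintro ⟨μ, hμ, hθμ⟩ t -
    obtain ⟨r, hr, halloc, hrμ⟩ :=
      DemographicDisparity.exists_allocation_of_mem_MSet μX κ1 κ0 hμ
    have hτ := Tuple.monotone_sort fun j => t j
    rw [DemographicDisparity.integral_setIntegral_quantile_mul_quantile μX κ1 κ0 hτ]
    refine le_of_eq_of_le (Finset.sum_congr rfl fun j _ => ?_)
      (DemographicDisparity.sum_mul_integral_le_sum_mul_integral_greedyAt μX κ1 κ0 hr halloc hτ)
    rw [mul_assoc, ← DemographicDisparity.measure_setOf_snd_fst_eq hμ, hθμ, hrμ]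
  · intro h
    obtain ⟨r, hr, halloc, hrθ⟩ := DemographicDisparity.exists_allocation_of_forall_le μX κ1 κ0
      (c := fun j => θ j * ((μX.compProd κ0).map Prod.swap {q | q.1 = j}).toReal)
      (by simpa only [mul_assoc] using h)
    obtain ⟨μ, hμ, hμr⟩ := DemographicDisparity.exists_mem_MSet_of_allocation μX κ1 κ0 hr halloc
    exact ⟨μ, hμ, fun j => by rw [DemographicDisparity.measure_setOf_snd_fst_eq hμ, hμr, hrθ]⟩

/-- Proposition 5: the identified set of the within-class approval probabilities in the
demographic-disparity model.  Here the binary decision takes values in `Fin 2` (`1` = approval)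
and the protected attribute takes values in `Fin J`.  The vector `θ ∈ [0,1]^J` satisfies the
moment conditions `θ_j μ(y0 = a_j) = μ(y1 = 1, y0 = a_j)` for some `μ ∈ M(μ1X, μ0X)` iff for
every `t` on the unit sphere of `ℝ^J`,
`∑_j t_j θ_j μ0X({a_j} × X) ≤ ∫ ∫₀¹ F⁻¹_{D∣x}(u) F⁻¹_{D_t∣x}(u) du dμX`. -/
theorem demographic_disparity_identified_set
    {J : ℕ} {X : Type*} [MeasurableSpace X] [StandardBorelSpace X]
    (μX : Measure X) [IsProbabilityMeasure μX]
    (κ1 : Kernel X (Fin 2)) [IsMarkovKernel κ1]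
    (κ0 : Kernel X (Fin J)) [IsMarkovKernel κ0]
    (μ1X : Measure (Fin 2 × X)) (μ0X : Measure (Fin J × X))
    (hκ1 : (μX.compProd κ1).map Prod.swap = μ1X)
    (hκ0 : (μX.compProd κ0).map Prod.swap = μ0X)
    (θ : EuclideanSpace ℝ (Fin J)) (hθ : ∀ j, θ j ∈ Set.Icc (0:ℝ) 1) :
    (∃ μ ∈ MSet μ1X μ0X, ∀ j : Fin J,
        θ j * (μ {p : Fin 2 × Fin J × X | p.2.1 = j}).toReal =
          (μ {p : Fin 2 × Fin J × X | p.1 = 1 ∧ p.2.1 = j}).toReal) ↔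
      ∀ t : EuclideanSpace ℝ (Fin J), ‖t‖ = 1 →
        (∑ j : Fin J, t j * θ j * (μ0X {q : Fin J × X | q.1 = j}).toReal) ≤
          ∫ x, ∫ u in Set.Ioo (0:ℝ) 1,
            quantile ((κ1 x).map (fun y1 : Fin 2 => if y1 = 1 then (1:ℝ) else 0)) u *
              quantile ((κ0 x).map (fun j : Fin J => t j)) u ∂volume ∂μX :=
  demographic_disparity_identified_set_general μX κ1 κ0 μ1X μ0X hκ1 hκ0 θ
end

section
/- In the demographic-disparity model with Y1 ∈ {0,1}, Y0 ∈ {a_1, …, a_J} (J ≥ 2), X a standard Borel space with probability measure μ_X, kernels κ1 from X to probability measures on {0,1} and κ0 from X to probability measures on {a_1,…,a_J}, and induced joint laws μ1X, μ0X: fix distinct classes a_j ≠ a_{j†} with p_j := μ0X({a_j} × X) > 0 and p_{j†} := μ0X({a_{j†}} × X) > 0. Set P_A(x) := κ1(x)({1}), P_B(x) := κ0(x)({a_j}), P_C(x) := κ0(x)({a_{j†}}). Then the identified set of the demographic disparity, namely { μ({y1=1, y0=a_j})/p_j − μ({y1=1, y0=a_{j†}})/p_{j†} : μ ∈ M(μ1X,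 μ0X) }, equals the closed interval [δ^L, δ^U], where δ^U = (∫ min{P_A, P_B} dμ_X)/p_j − (∫ max{P_A + P_C − 1, 0} dμ_X)/p_{j†} and δ^L = (∫ max{P_A + P_B − 1, 0} dμ_X)/p_j − (∫ min{P_A, P_C} dμ_X)/p_{j†} (Corollary 1 for the DD measure, valid for any number J ≥ 2 of protected classes). -/
/-!
Fréchet–Hoeffding bounds, cell by cell. Splitting `X` along `{x | κ1 x A ≤ κ0 x B}` shows that a
coupling puts at most `∫ min (κ1 x A) (κ0 x B)` on `A × B`; since `A × B` and `A × Bᶜ` together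
carry `∫ κ1 x A`, the same bound for `Bᶜ` gives the lower bound `∫ (κ1 x A + κ0 x B - 1)⁺`.
One coupling attains the upper bound at `j` and the lower bound at `j'` simultaneously: given `x`,
it spreads the mass `κ1 x {1}` greedily over the classes, first on `j` and last on `j'`.
Exchanging `j` and `j'` gives the other endpoint, and the mixtures of these two couplings, on
which the disparity is affine, fill the interval between them.
-/

open MeasureTheory ProbabilityTheory

open scoped ENNReal

lemma ENNReal.toReal_sub_one_sub {u v : ℝ≥0∞} (hu : u ≠ ⊤) (hv : v ≤ 1) :
    (u - (1 - v)).toReal = max (u.toReal + v.toReal - 1) 0 := by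
  have hv_ne_top : v ≠ ⊤ := ne_top_of_le_ne_top ENNReal.one_ne_top hv
  have hv_le : v.toReal ≤ 1 := ENNReal.toReal_le_of_le_ofReal zero_le_one (by simpa using hv)
  rw [show u.toReal + v.toReal - 1 = u.toReal - (1 - v.toReal) by ring, ← ENNReal.toReal_ofReal',
    ENNReal.ofReal_sub _ (sub_nonneg.2 hv_le), ENNReal.ofReal_sub _ ENNReal.toReal_nonneg,
    ENNReal.ofReal_one, ENNReal.ofReal_toReal hu, ENNReal.ofReal_toReal hv_ne_top]

section FrechetBounds

variable {X Y1 Y0 : Type*} [MeasurableSpace X] [MeasurableSpace Y1] [MeasurableSpace Y0]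
  {μX : Measure X} {κ1 : Kernel X Y1} {κ0 : Kernel X Y0} {μ : Measure (Y1 × Y0 × X)}
  {A : Set Y1} {B : Set Y0} {S : Set X}

lemma measurableSet_cell (hA : MeasurableSet A) (hB : MeasurableSet B) :
    MeasurableSet {p : Y1 × Y0 × X | p.1 ∈ A ∧ p.2.1 ∈ B} :=
  (measurable_fst hA).inter (measurable_snd.fst hB)

lemma toReal_lintegral_min [IsFiniteKernel κ1] [IsFiniteKernel κ0]
    (hA : MeasurableSet A) (hB : MeasurableSet B) :
    (∫⁻ x, min (κ1 x A) (κ0 x B) ∂μX).toReal =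
      ∫ x, min (κ1 x A).toReal (κ0 x B).toReal ∂μX := by
  have := κ1.measurable_coe hA
  have := κ0.measurable_coe hB
  rw [← integral_toReal (f := fun x => min (κ1 x A) (κ0 x B)) (by fun_prop)
    (ae_of_all _ fun x => (min_le_left _ _).trans_lt (measure_lt_top _ _))]
  simp only [ENNReal.toReal_min (measure_ne_top _ _) (measure_ne_top _ _)]

lemma toReal_lintegral_sub_compl [IsFiniteKernel κ1] [IsMarkovKernel κ0]
    (hA : MeasurableSet A) (hB : MeasurableSet B) :
    (∫⁻ x, κ1 x A - κ0 x Bᶜ ∂μX).toReal =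
      ∫ x, max ((κ1 x A).toReal + (κ0 x B).toReal - 1) 0 ∂μX := by
  have := κ1.measurable_coe hA
  have := κ0.measurable_coe hB.compl
  rw [← integral_toReal (f := fun x => κ1 x A - κ0 x Bᶜ) (by fun_prop)
    (ae_of_all _ fun x => tsub_le_self.trans_lt (measure_lt_top _ _))]
  simp only [prob_compl_eq_one_sub hB,
    ENNReal.toReal_sub_one_sub (measure_ne_top _ _) prob_le_one]

variable [SFinite μX]

lemma map_swap_compProd_apply_prod {Y : Type*} [MeasurableSpace Y] {κ : Kernel X Y}
    [IsSFiniteKernel κ] {T : Set Y} (hT : MeasurableSet T) (hS : MeasurableSet S) :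
    ((μX ⊗ₘ κ).map Prod.swap) (T ×ˢ S) = ∫⁻ x in S, κ x T ∂μX := by
  rw [Measure.map_apply measurable_swap (hT.prod hS), Set.preimage_swap_prod,
    Measure.compProd_apply_prod hS hT]

lemma measure_left_marginal_of_mem_MSet [IsSFiniteKernel κ1]
    (hμ : μ ∈ MSet ((μX ⊗ₘ κ1).map Prod.swap) ((μX ⊗ₘ κ0).map Prod.swap))
    (hA : MeasurableSet A) (hS : MeasurableSet S) :
    μ {p | p.1 ∈ A ∧ p.2.2 ∈ S} = ∫⁻ x in S, κ1 x A ∂μX := by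
  rw [← map_swap_compProd_apply_prod hA hS, ← hμ.2.1,
    Measure.map_apply (by fun_prop) (hA.prod hS)]
  rfl

lemma measure_right_marginal_of_mem_MSet [IsSFiniteKernel κ0]
    (hμ : μ ∈ MSet ((μX ⊗ₘ κ1).map Prod.swap) ((μX ⊗ₘ κ0).map Prod.swap))
    (hB : MeasurableSet B) (hS : MeasurableSet S) :
    μ {p | p.2.1 ∈ B ∧ p.2.2 ∈ S} = ∫⁻ x in S, κ0 x B ∂μX := by
  rw [← map_swap_compProd_apply_prod hB hS, ← hμ.2.2,
    Measure.map_apply (by fun_prop) (hB.prod hS)]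
  rfl

lemma lintegral_ne_top_of_mem_MSet [IsSFiniteKernel κ1]
    (hμ : μ ∈ MSet ((μX ⊗ₘ κ1).map Prod.swap) ((μX ⊗ₘ κ0).map Prod.swap))
    (hA : MeasurableSet A) : ∫⁻ x, κ1 x A ∂μX ≠ ⊤ := by
  have := hμ.1
  rw [← setLIntegral_univ, ← measure_left_marginal_of_mem_MSet hμ hA .univ]
  exact measure_ne_top _ _

theorem measure_le_lintegral_min_of_mem_MSet [IsSFiniteKernel κ1] [IsSFiniteKernel κ0]
    (hμ : μ ∈ MSet ((μX ⊗ₘ κ1).map Prod.swap) ((μX ⊗ₘ κ0).map Prod.swap))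
    (hA : MeasurableSet A) (hB : MeasurableSet B) :
    μ {p | p.1 ∈ A ∧ p.2.1 ∈ B} ≤ ∫⁻ x, min (κ1 x A) (κ0 x B) ∂μX := by
  classical
  set S := {x | κ1 x A ≤ κ0 x B}
  have hS : MeasurableSet S := measurableSet_le (κ1.measurable_coe hA) (κ0.measurable_coe hB)
  calc μ {p | p.1 ∈ A ∧ p.2.1 ∈ B}
      ≤ μ ({p | p.1 ∈ A ∧ p.2.2 ∈ S} ∪ {p | p.2.1 ∈ B ∧ p.2.2 ∈ Sᶜ}) :=
        measure_mono fun p hp => (em (p.2.2 ∈ S)).imp (⟨hp.1, ·⟩) (⟨hp.2, ·⟩)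
    _ ≤ ∫⁻ x in S, κ1 x A ∂μX + ∫⁻ x in Sᶜ, κ0 x B ∂μX := by
        grw [measure_union_le, measure_left_marginal_of_mem_MSet hμ hA hS,
          measure_right_marginal_of_mem_MSet hμ hB hS.compl]
    _ = ∫⁻ x, S.piecewise (κ1 · A) (κ0 · B) x ∂μX := (lintegral_piecewise hS _ _).symm
    _ = ∫⁻ x, min (κ1 x A) (κ0 x B) ∂μX := by
        refine lintegral_congr fun x => ?_
        by_cases hx : x ∈ S
        · simp [hx, min_eq_left (show κ1 x A ≤ κ0 x B from hx)]
        · simp [hx, min_eq_right (le_of_not_ge (show ¬ κ1 x A ≤ κ0 x B from hx))]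

theorem lintegral_sub_le_measure_of_mem_MSet [IsSFiniteKernel κ1] [IsSFiniteKernel κ0]
    (hμ : μ ∈ MSet ((μX ⊗ₘ κ1).map Prod.swap) ((μX ⊗ₘ κ0).map Prod.swap))
    (hA : MeasurableSet A) (hB : MeasurableSet B) :
    ∫⁻ x, κ1 x A - κ0 x Bᶜ ∂μX ≤ μ {p | p.1 ∈ A ∧ p.2.1 ∈ B} := by
  have := hμ.1
  have hsplit : μ {p | p.1 ∈ A ∧ p.2.1 ∈ B} + μ {p | p.1 ∈ A ∧ p.2.1 ∈ Bᶜ} =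
      ∫⁻ x, κ1 x A ∂μX := by
    rw [← measure_union, ← setLIntegral_univ, ← measure_left_marginal_of_mem_MSet hμ hA .univ]
    · congr 1
      ext p
      simp only [Set.mem_union, Set.mem_ofPred_eq, Set.mem_compl_iff, Set.mem_univ, and_true]
      tauto
    · exact Set.disjoint_left.2 fun p h h' => h'.2 h.2
    · exact measurableSet_cell hA hB.compl
  have hmin_ne_top : ∫⁻ x, min (κ1 x A) (κ0 x Bᶜ) ∂μX ≠ ⊤ :=
    ne_top_of_le_ne_top (lintegral_ne_top_of_mem_MSet hμ hA)
      (lintegral_mono fun x => min_le_left _ _)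
  refine ENNReal.le_of_add_le_add_right hmin_ne_top ?_
  calc ∫⁻ x, κ1 x A - κ0 x Bᶜ ∂μX + ∫⁻ x, min (κ1 x A) (κ0 x Bᶜ) ∂μX
      = ∫⁻ x, κ1 x A ∂μX := by
        rw [← lintegral_add_right _ ((κ1.measurable_coe hA).min (κ0.measurable_coe hB.compl))]
        simp only [tsub_add_min]
    _ ≤ μ {p | p.1 ∈ A ∧ p.2.1 ∈ B} + ∫⁻ x, min (κ1 x A) (κ0 x Bᶜ) ∂μX := by
        grw [← hsplit, measure_le_lintegral_min_of_mem_MSet hμ hA hB.compl]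

theorem measureReal_le_integral_min_of_mem_MSet [IsMarkovKernel κ1] [IsMarkovKernel κ0]
    (hμ : μ ∈ MSet ((μX ⊗ₘ κ1).map Prod.swap) ((μX ⊗ₘ κ0).map Prod.swap))
    (hA : MeasurableSet A) (hB : MeasurableSet B) :
    μ.real {p | p.1 ∈ A ∧ p.2.1 ∈ B} ≤ ∫ x, min (κ1 x A).toReal (κ0 x B).toReal ∂μX := by
  rw [← toReal_lintegral_min hA hB]
  exact ENNReal.toReal_mono
    (ne_top_of_le_ne_top (lintegral_ne_top_of_mem_MSet hμ hA)
      (lintegral_mono fun x => min_le_left _ _))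
    (measure_le_lintegral_min_of_mem_MSet hμ hA hB)

theorem integral_max_le_measureReal_of_mem_MSet [IsMarkovKernel κ1] [IsMarkovKernel κ0]
    (hμ : μ ∈ MSet ((μX ⊗ₘ κ1).map Prod.swap) ((μX ⊗ₘ κ0).map Prod.swap))
    (hA : MeasurableSet A) (hB : MeasurableSet B) :
    ∫ x, max ((κ1 x A).toReal + (κ0 x B).toReal - 1) 0 ∂μX ≤
      μ.real {p | p.1 ∈ A ∧ p.2.1 ∈ B} := by
  have := hμ.1
  rw [← toReal_lintegral_sub_compl hA hB]
  exact ENNReal.toReal_mono (measure_ne_top _ _) (lintegral_sub_le_measure_of_mem_MSet hμ hA hB)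

end FrechetBounds

section CouplingKernel

variable {X Y1 Y0 : Type*} [MeasurableSpace X] [MeasurableSpace Y1] [MeasurableSpace Y0]
  {μX : Measure X} {κ1 : Kernel X Y1} {κ0 : Kernel X Y0}

theorem map_compProd_mem_MSet [IsProbabilityMeasure μX] (η : Kernel X (Y1 × Y0))
    [IsMarkovKernel η] (h1 : ∀ x, (η x).map Prod.fst = κ1 x)
    (h0 : ∀ x, (η x).map Prod.snd = κ0 x) :
    (μX ⊗ₘ η).map (fun q => (q.2.1, q.2.2, q.1)) ∈
      MSet ((μX ⊗ₘ κ1).map Prod.swap) ((μX ⊗ₘ κ0).map Prod.swap) := by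
  have hfst : η.map Prod.fst = κ1 :=
    Kernel.ext fun x => by rw [Kernel.map_apply _ measurable_fst, h1]
  have hsnd : η.map Prod.snd = κ0 :=
    Kernel.ext fun x => by rw [Kernel.map_apply _ measurable_snd, h0]
  refine ⟨Measure.isProbabilityMeasure_map (by fun_prop), ?_, ?_⟩
  · rw [Measure.map_map (by fun_prop) (by fun_prop), ← hfst, Measure.compProd_map measurable_fst,
      Measure.map_map measurable_swap (by fun_prop)]
    rfl
  · rw [Measure.map_map (by fun_prop) (by fun_prop), ← hsnd, Measure.compProd_map measurable_snd,
      Measure.map_map measurable_swap (by fun_prop)]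
    rfl

lemma map_compProd_apply_cell [SFinite μX] (η : Kernel X (Y1 × Y0)) [IsSFiniteKernel η]
    {A : Set Y1} {B : Set Y0} (hA : MeasurableSet A) (hB : MeasurableSet B) :
    (μX ⊗ₘ η).map (fun q => (q.2.1, q.2.2, q.1)) {p | p.1 ∈ A ∧ p.2.1 ∈ B} =
      ∫⁻ x, η x (A ×ˢ B) ∂μX := by
  rw [Measure.map_apply (by fun_prop) (measurableSet_cell hA hB)]
  exact Measure.compProd_apply (measurable_snd (hA.prod hB))

end CouplingKernel

section BernoulliCoupling

variable {ι : Type*} [Fintype ι] [MeasurableSpace ι]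

noncomputable def bernoulliCoupling (q : Measure ι) (m : ι → ℝ≥0∞) : Measure (Fin 2 × ι) :=
  ∑ k, (m k • Measure.dirac (1, k) + (q {k} - m k) • Measure.dirac (0, k))

lemma bernoulliCoupling_apply (q : Measure ι) (m : ι → ℝ≥0∞) {s : Set (Fin 2 × ι)}
    (hs : MeasurableSet s) :
    bernoulliCoupling q m s =
      ∑ k, (m k * s.indicator 1 (1, k) + (q {k} - m k) * s.indicator 1 (0, k)) := by
  simp [bernoulliCoupling, Measure.dirac_apply' _ hs]

variable [MeasurableSingletonClass ι]

lemma bernoulliCoupling_singleton_one (q : Measure ι) (m : ι → ℝ≥0∞) (k : ι) :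
    bernoulliCoupling q m {(1, k)} = m k := by
  classical
  simp [bernoulliCoupling_apply, Set.indicator, Prod.ext_iff]

lemma map_snd_bernoulliCoupling {q : Measure ι} {m : ι → ℝ≥0∞} (hm : ∀ k, m k ≤ q {k}) :
    (bernoulliCoupling q m).map Prod.snd = q := by
  classical
  refine Measure.ext_of_singleton fun i => ?_
  rw [Measure.map_apply measurable_snd (measurableSet_singleton i),
    bernoulliCoupling_apply _ _ (measurable_snd (measurableSet_singleton i))]
  simp [Set.indicator, Finset.sum_add_distrib, add_tsub_cancel_of_le (hm i)]

lemma map_fst_bernoulliCoupling {q : Measure ι} [IsProbabilityMeasure q] {m : ι → ℝ≥0∞}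
    (hm : ∀ k, m k ≤ q {k}) {p : Measure (Fin 2)} [IsProbabilityMeasure p]
    (hsum : ∑ k, m k = p {1}) :
    (bernoulliCoupling q m).map Prod.fst = p := by
  refine Measure.ext_of_singleton fun i => ?_
  rw [Measure.map_apply measurable_fst (measurableSet_singleton i),
    bernoulliCoupling_apply _ _ (measurable_fst (measurableSet_singleton i))]
  fin_cases i
  · have h0 : ({0} : Set (Fin 2)) = {1}ᶜ := by ext y; fin_cases y <;> simp
    simp only [Set.indicator, Fin.zero_eta, Fin.isValue, Set.mem_preimage, Set.mem_singleton_iff,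
      one_ne_zero, ↓reduceIte, mul_zero, Pi.one_apply, mul_one, zero_add]
    rw [h0, prob_compl_eq_one_sub (measurableSet_singleton 1), ← hsum]
    refine ENNReal.eq_sub_of_add_eq (hsum ▸ measure_ne_top _ _) ?_
    rw [← Finset.sum_add_distrib, Finset.sum_congr rfl fun k _ => tsub_add_cancel_of_le (hm k),
      sum_measure_singleton, Finset.coe_univ, measure_univ]
  · simpa [Set.indicator] using hsum

noncomputable def bernoulliCouplingKernel {X : Type*} [MeasurableSpace X] (κ : Kernel X ι)
    (m : X → ι → ℝ≥0∞) (hm : ∀ k, Measurable (m · k)) : Kernel X (Fin 2 × ι) where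
  toFun x := bernoulliCoupling (κ x) (m x)
  measurable' := Measure.measurable_of_measurable_coe _ fun s hs => by
    simp only [bernoulliCoupling_apply _ _ hs]
    have := fun k => κ.measurable_coe (measurableSet_singleton k)
    fun_prop

end BernoulliCoupling

section ExtremalCoupling

variable {ι : Type*} [DecidableEq ι] [MeasurableSpace ι] [MeasurableSingletonClass ι]

-- The mass `a` is spread greedily: first on `j`, then proportionally over the classes other
-- than `j` and `j'`, and whatever is left goes to `j'`.
noncomputable def extremalWeight (q : Measure ι) (j j' : ι) (a : ℝ≥0∞) (k : ι) : ℝ≥0∞ :=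
  if k = j then min a (q {j})
  else if k = j' then a - q {j'}ᶜ
  else q {k} * (min (a - q {j}) (q {j, j'}ᶜ) / q {j, j'}ᶜ)

variable {q : Measure ι} {j j' : ι} {a : ℝ≥0∞}

lemma extremalWeight_le [IsProbabilityMeasure q] (ha : a ≤ 1) (k : ι) :
    extremalWeight q j j' a k ≤ q {k} := by
  unfold extremalWeight
  split_ifs with hj hj'
  · exact hj ▸ min_le_right _ _
  · rw [hj', tsub_le_iff_left, add_comm, prob_add_prob_compl (measurableSet_singleton j')]
    exact ha
  · exact mul_le_of_le_one_right' <|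
      (ENNReal.div_le_div_right (min_le_right _ _) _).trans ENNReal.div_self_le_one

lemma sum_extremalWeight [Fintype ι] [IsFiniteMeasure q] (hjj' : j ≠ j') :
    ∑ k, extremalWeight q j j' a k = a := by
  have hrest : ∑ k ∈ (Finset.univ.erase j).erase j', q {k} = q {j, j'}ᶜ := by
    rw [sum_measure_singleton]
    congr 1
    ext k
    simp
  have hcompl : q {j'}ᶜ = q {j} + q {j, j'}ᶜ := by
    have hset : ({j'}ᶜ : Set ι) = {j} ∪ {j, j'}ᶜ := by
      ext k; by_cases hk : k = j <;> simp [hk, hjj']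
    rw [hset, measure_union (by simp) ((measurableSet_singleton j').insert j).compl]
  have hrest_mul {r : ℝ≥0∞} (hr : r ≤ q {j, j'}ᶜ) : q {j, j'}ᶜ * (r / q {j, j'}ᶜ) = r := by
    rcases eq_or_ne (q {j, j'}ᶜ) 0 with h | h
    · simp [h, nonpos_iff_eq_zero.1 (h ▸ hr)]
    · exact ENNReal.mul_div_cancel h (measure_ne_top _ _)
  have hj'_mem : j' ∈ Finset.univ.erase j := Finset.mem_erase.2 ⟨hjj'.symm, Finset.mem_univ _⟩
  rw [← Finset.add_sum_erase _ _ (Finset.mem_univ j), ← Finset.add_sum_erase _ _ hj'_mem,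
    Finset.sum_congr rfl fun k hk => by
      rw [extremalWeight, if_neg (Finset.ne_of_mem_erase (Finset.mem_of_mem_erase hk)),
        if_neg (Finset.ne_of_mem_erase hk)],
    ← Finset.sum_mul, hrest, hrest_mul (min_le_right _ _)]
  simp only [extremalWeight, if_pos, if_neg hjj'.symm, hcompl, ← tsub_tsub, tsub_add_min]
  rw [add_comm, tsub_add_min]

variable {X : Type*} [MeasurableSpace X]

lemma measurable_extremalWeight {κ : Kernel X ι} {f : X → ℝ≥0∞} (hf : Measurable f) (k : ι) :
    Measurable fun x => extremalWeight (κ x) j j' (f x) k := by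
  have hκ {s : Set ι} (hs : MeasurableSet s) : Measurable fun x => κ x s := κ.measurable_coe hs
  have hj := hκ (measurableSet_singleton j)
  have hj' := hκ (measurableSet_singleton j').compl
  have hrest := hκ ((measurableSet_singleton j').insert j).compl
  have hk := hκ (measurableSet_singleton k)
  unfold extremalWeight
  split_ifs <;> fun_prop

theorem exists_mem_MSet_measureReal_eq [Fintype ι] (μX : Measure X) [IsProbabilityMeasure μX]
    (κ1 : Kernel X (Fin 2)) [IsMarkovKernel κ1] (κ0 : Kernel X ι) [IsMarkovKernel κ0]
    (hjj' : j ≠ j') :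
    ∃ μ ∈ MSet ((μX ⊗ₘ κ1).map Prod.swap) ((μX ⊗ₘ κ0).map Prod.swap),
      μ.real {p | p.1 = 1 ∧ p.2.1 = j} = ∫ x, min (κ1 x {1}).toReal (κ0 x {j}).toReal ∂μX ∧
      μ.real {p | p.1 = 1 ∧ p.2.1 = j'} =
        ∫ x, max ((κ1 x {1}).toReal + (κ0 x {j'}).toReal - 1) 0 ∂μX := by
  let η := bernoulliCouplingKernel κ0 (fun x => extremalWeight (κ0 x) j j' (κ1 x {1}))
    (measurable_extremalWeight (κ1.measurable_coe (measurableSet_singleton 1)))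
  have h1 (x : X) : (η x).map Prod.fst = κ1 x :=
    map_fst_bernoulliCoupling (extremalWeight_le prob_le_one) (sum_extremalWeight hjj')
  have h0 (x : X) : (η x).map Prod.snd = κ0 x :=
    map_snd_bernoulliCoupling (extremalWeight_le prob_le_one)
  have : IsMarkovKernel η := ⟨fun x =>
    have : IsProbabilityMeasure ((η x).map Prod.fst) := h1 x ▸ inferInstance
    Measure.isProbabilityMeasure_of_map Prod.fst⟩
  have hcell (k : ι) :
      ((μX ⊗ₘ η).map (fun q => (q.2.1, q.2.2, q.1))) {p | p.1 = 1 ∧ p.2.1 = k} =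
        ∫⁻ x, extremalWeight (κ0 x) j j' (κ1 x {1}) k ∂μX := by
    refine (map_compProd_apply_cell η (.singleton 1) (.singleton k)).trans
      (lintegral_congr fun x => ?_)
    rw [Set.singleton_prod_singleton]
    exact bernoulliCoupling_singleton_one _ _ _
  refine ⟨_, map_compProd_mem_MSet η h1 h0, ?_, ?_⟩
  · rw [measureReal_def, hcell, ← toReal_lintegral_min (.singleton _) (.singleton _)]
    simp [extremalWeight]
  · rw [measureReal_def, hcell, ← toReal_lintegral_sub_compl (.singleton _) (.singleton _)]
    simp [extremalWeight, hjj'.symm]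

end ExtremalCoupling

section Mixture

variable {X Y1 Y0 : Type*} [MeasurableSpace X] [MeasurableSpace Y1] [MeasurableSpace Y0]
  {μ1X : Measure (Y1 × X)} {μ0X : Measure (Y0 × X)} {μ ν : Measure (Y1 × Y0 × X)} {s t : ℝ}

lemma smul_add_smul_mem_MSet_s12 (hμ : μ ∈ MSet μ1X μ0X) (hν : ν ∈ MSet μ1X μ0X) (hs : 0 ≤ s)
    (ht : 0 ≤ t) (hst : s + t = 1) :
    ENNReal.ofReal s • μ + ENNReal.ofReal t • ν ∈ MSet μ1X μ0X := by
  have hcoef : ENNReal.ofReal s + ENNReal.ofReal t = 1 := by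
    rw [← ENNReal.ofReal_add hs ht, hst, ENNReal.ofReal_one]
  obtain ⟨hμ_prob, hμ1, hμ0⟩ := hμ
  obtain ⟨hν_prob, hν1, hν0⟩ := hν
  refine ⟨⟨by simp [hcoef]⟩, ?_, ?_⟩
  · rw [Measure.map_add _ _ (by fun_prop), Measure.map_smul, Measure.map_smul, hμ1, hν1,
      ← add_smul, hcoef, one_smul]
  · rw [Measure.map_add _ _ (by fun_prop), Measure.map_smul, Measure.map_smul, hμ0, hν0,
      ← add_smul, hcoef, one_smul]

lemma measureReal_smul_add_smul [IsFiniteMeasure μ] [IsFiniteMeasure ν] (hs : 0 ≤ s)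
    (ht : 0 ≤ t) (E : Set (Y1 × Y0 × X)) :
    (ENNReal.ofReal s • μ + ENNReal.ofReal t • ν).real E = s * μ.real E + t * ν.real E := by
  have hfin (ρ : Measure (Y1 × Y0 × X)) [IsFiniteMeasure ρ] (r : ℝ) :
      (ENNReal.ofReal r • ρ) E ≠ ⊤ := by
    simpa using ENNReal.mul_ne_top ENNReal.ofReal_ne_top (measure_ne_top ρ E)
  rw [measureReal_add_apply (hfin μ s) (hfin ν t), measureReal_ennreal_smul_apply,
    measureReal_ennreal_smul_apply, ENNReal.toReal_ofReal hs, ENNReal.toReal_ofReal ht]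

end Mixture

theorem demographic_disparity_interval_general
    {J : ℕ} {X : Type*} [MeasurableSpace X]
    (μX : Measure X) [IsProbabilityMeasure μX]
    (κ1 : Kernel X (Fin 2)) [IsMarkovKernel κ1]
    (κ0 : Kernel X (Fin J)) [IsMarkovKernel κ0]
    (μ1X : Measure (Fin 2 × X)) (μ0X : Measure (Fin J × X))
    (hκ1 : (μX.compProd κ1).map Prod.swap = μ1X)
    (hκ0 : (μX.compProd κ0).map Prod.swap = μ0X)
    (j j' : Fin J) (hjj' : j ≠ j')
    (pj pj' : ℝ)
    (hpjpos : 0 < pj) (hpj'pos : 0 < pj')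
    (PA PB PC : X → ℝ)
    (hPA : PA = fun x => (κ1 x {1}).toReal)
    (hPB : PB = fun x => (κ0 x {j}).toReal)
    (hPC : PC = fun x => (κ0 x {j'}).toReal) :
    {d : ℝ | ∃ μ ∈ MSet μ1X μ0X,
        d = (μ {p : Fin 2 × Fin J × X | p.1 = 1 ∧ p.2.1 = j}).toReal / pj -
            (μ {p : Fin 2 × Fin J × X | p.1 = 1 ∧ p.2.1 = j'}).toReal / pj'} =
      Set.Icc
        ((∫ x, max (PA x + PB x - 1) 0 ∂μX) / pj - (∫ x, min (PA x) (PC x) ∂μX) / pj')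
        ((∫ x, min (PA x) (PB x) ∂μX) / pj - (∫ x, max (PA x + PC x - 1) 0 ∂μX) / pj') := by
  subst hκ1 hκ0 hPA hPB hPC
  beta_reduce
  obtain ⟨μU, hμU, hUj, hUj'⟩ := exists_mem_MSet_measureReal_eq μX κ1 κ0 hjj'
  obtain ⟨μL, hμL, hLj', hLj⟩ := exists_mem_MSet_measureReal_eq μX κ1 κ0 hjj'.symm
  ext d
  constructor
  · rintro ⟨μ, hμ, rfl⟩
    have hle (k : Fin J) :=
      measureReal_le_integral_min_of_mem_MSet hμ (.singleton 1) (.singleton k)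
    have hge (k : Fin J) :=
      integral_max_le_measureReal_of_mem_MSet hμ (.singleton 1) (.singleton k)
    exact ⟨by gcongr; exacts [hge j, hle j'], by gcongr; exacts [hle j, hge j']⟩
  · intro hd
    rw [← segment_eq_Icc (hd.1.trans hd.2)] at hd
    obtain ⟨s, t, hs, ht, hst, rfl⟩ := hd
    have := hμU.1
    have := hμL.1
    refine ⟨_, smul_add_smul_mem_MSet_s12 hμL hμU hs ht hst, ?_⟩
    rw [← measureReal_def, ← measureReal_def, measureReal_smul_add_smul hs ht,
      measureReal_smul_add_smul hs ht, hUj, hUj', hLj, hLj', smul_eq_mul, smul_eq_mul]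
    ring

/-- Corollary 1: for any number `J ≥ 2` of protected classes, the identified set of the
demographic disparity `δ_DD(j, j†)` between two distinct classes equals the closed interval
`[δ^L, δ^U]` given by the Fréchet–Hoeffding-type bounds. -/
theorem demographic_disparity_interval
    {J : ℕ} (hJ : 2 ≤ J) {X : Type*} [MeasurableSpace X] [StandardBorelSpace X]
    (μX : Measure X) [IsProbabilityMeasure μX]
    (κ1 : Kernel X (Fin 2)) [IsMarkovKernel κ1]
    (κ0 : Kernel X (Fin J)) [IsMarkovKernel κ0]
    (μ1X : Measure (Fin 2 × X)) (μ0X : Measure (Fin J × X))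
    (hκ1 : (μX.compProd κ1).map Prod.swap = μ1X)
    (hκ0 : (μX.compProd κ0).map Prod.swap = μ0X)
    (j j' : Fin J) (hjj' : j ≠ j')
    (pj pj' : ℝ)
    (hpj : pj = (μ0X {q : Fin J × X | q.1 = j}).toReal)
    (hpj' : pj' = (μ0X {q : Fin J × X | q.1 = j'}).toReal)
    (hpjpos : 0 < pj) (hpj'pos : 0 < pj')
    (PA PB PC : X → ℝ)
    (hPA : PA = fun x => (κ1 x {1}).toReal)
    (hPB : PB = fun x => (κ0 x {j}).toReal)
    (hPC : PC = fun x => (κ0 x {j'}).toReal) :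
    {d : ℝ | ∃ μ ∈ MSet μ1X μ0X,
        d = (μ {p : Fin 2 × Fin J × X | p.1 = 1 ∧ p.2.1 = j}).toReal / pj -
            (μ {p : Fin 2 × Fin J × X | p.1 = 1 ∧ p.2.1 = j'}).toReal / pj'} =
      Set.Icc
        ((∫ x, max (PA x + PB x - 1) 0 ∂μX) / pj - (∫ x, min (PA x) (PC x) ∂μX) / pj')
        ((∫ x, min (PA x) (PB x) ∂μX) / pj - (∫ x, max (PA x + PC x - 1) 0 ∂μX) / pj') :=
  demographic_disparity_interval_general μX κ1 κ0 μ1X μ0X hκ1 hκ0 j j' hjj' pj pj' hpjpos hpj'pos PA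
    PB PC hPA hPB hPC
end

section
/- Fix J ≥ 1 and cost values π(i, j) ∈ ℝ for i ∈ {0, 1} and j ∈ {1, …, J}, nonnegative capacities Γ0(1), …, Γ0(J) and nonnegative demands Γ1(0), Γ1(1) with Γ1(0) + Γ1(1) ≤ Σ_{j=1}^J Γ0(j). Suppose π is submodular: for all j > j†, π(1, j) − π(0, j) − π(1, j†) + π(0, j†) ≤ 0. Consider the feasible set F of matrices Γ(i, j) ≥ 0 with Σ_{i=0}^1 Γ(i, j) ≤ Γ0(j) for every j and Σ_{j=1}^J Γ(i, j) = Γ1(i) for i = 0, 1. Then F is nonempty, the minimum of Σ_{i,j} π(i,j) Γ(i,j) over F is attained, and there exists a minimizer Γ* with monotone support: for some J* ∈ {1, …, J}, Γ*(1, j) = 0 for all j < J* and Γ*(0, j) = 0 for all j > J* (the monotone-support lemma for the optimal partial transport problem, Lemma 4). -/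
/-!
Take a plan that minimises the cost and, among all minimisers, the secondary potential
`∑ₖ w(k) Γ(0, k)` for a strictly increasing `w`; both minima exist because the feasible set is a
nonempty compact polytope. If such a plan had a crossing `Γ(1, j) > 0`, `Γ(0, j') > 0` with
`j < j'`, moving mass `δ` from `(1, j), (0, j')` to `(0, j), (1, j')` keeps it feasible, does not
increase the cost by submodularity, and strictly lowers the potential. Without crossings, the first
class reached by outcome `1` separates the two supports.
-/

open Finset

theorem IsCompact.exists_isMinOn_lex {X : Type*} [TopologicalSpace X] {K : Set X}
    (hK : IsCompact K) (hne : K.Nonempty) {f g : X → ℝ} (hf : Continuous f)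
    (hg : Continuous g) :
    ∃ x ∈ K, IsMinOn f K x ∧ ∀ y ∈ K, f y ≤ f x → g x ≤ g y := by
  obtain ⟨x₀, hx₀, hmin⟩ := hK.exists_isMinOn hne hf.continuousOn
  obtain ⟨x, ⟨hx, hfx⟩, hgx⟩ := (hK.inter_right (isClosed_Iic.preimage hf)).exists_isMinOn
    ⟨x₀, hx₀, le_rfl⟩ hg.continuousOn
  exact ⟨x, hx, isMinOn_iff.2 fun y hy => hfx.trans (hmin hy),
    fun y hy hfy => hgx ⟨hy, hfy.trans hfx⟩⟩

section PartialTransport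

variable {ι : Type*} [Fintype ι]

def partialTransportPlans (cap : ι → ℝ) (dem : Fin 2 → ℝ) : Set (Fin 2 → ι → ℝ) :=
  {Γ | (∀ i j, 0 ≤ Γ i j) ∧ (∀ j, Γ 0 j + Γ 1 j ≤ cap j) ∧ (∀ i, ∑ j, Γ i j = dem i)}

def transportCost (π Γ : Fin 2 → ι → ℝ) : ℝ :=
  ∑ i, ∑ j, π i j * Γ i j

theorem continuous_transportCost (π : Fin 2 → ι → ℝ) : Continuous (transportCost π) := by
  unfold transportCost
  fun_prop

theorem transportCost_add_smul (π Γ Δ : Fin 2 → ι → ℝ) (δ : ℝ) :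
    transportCost π (Γ + δ • Δ) = transportCost π Γ + δ * transportCost π Δ := by
  simp only [transportCost, Pi.add_apply, Pi.smul_apply, smul_eq_mul, mul_add, sum_add_distrib,
    mul_sum]
  congr 1
  exact sum_congr rfl fun i _ => sum_congr rfl fun j _ => by ring

theorem partialTransportPlans_nonempty {cap : ι → ℝ} {dem : Fin 2 → ℝ}
    (hcap : ∀ j, 0 ≤ cap j) (hdem : ∀ i, 0 ≤ dem i) (hmass : dem 0 + dem 1 ≤ ∑ j, cap j) :
    (partialTransportPlans cap dem).Nonempty := by
  set S := ∑ j, cap j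
  have hS : 0 ≤ S := sum_nonneg fun j _ => hcap j
  -- for `S = 0` the junk value `x / 0 = 0` makes this the zero plan, which is then feasible
  refine ⟨fun i j => dem i / S * cap j, fun i j => mul_nonneg (div_nonneg (hdem i) hS) (hcap j),
    fun j => ?_, fun i => ?_⟩
  · calc dem 0 / S * cap j + dem 1 / S * cap j = (dem 0 + dem 1) / S * cap j := by ring
      _ ≤ 1 * cap j := by gcongr; exacts [hcap j, div_le_one_of_le₀ hmass hS]
      _ = cap j := one_mul _
  · rw [← mul_sum]
    refine div_mul_cancel_of_imp fun hS0 => ?_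
    fin_cases i <;> simp <;> linarith [hdem 0, hdem 1]

theorem isCompact_partialTransportPlans (cap : ι → ℝ) (dem : Fin 2 → ℝ) :
    IsCompact (partialTransportPlans cap dem) := by
  have hclosed : IsClosed (partialTransportPlans cap dem) := by
    simp only [partialTransportPlans, Set.ofPred_and, Set.ofPred_forall]
    refine .inter (isClosed_iInter fun i => isClosed_iInter fun j => ?_)
      (.inter (isClosed_iInter fun j => ?_) (isClosed_iInter fun i => ?_))
    · exact isClosed_le continuous_const (by fun_prop)
    · exact isClosed_le (by fun_prop) continuous_const
    · exact isClosed_eq (by fun_prop) continuous_const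
  refine (isCompact_Icc (a := 0) (b := fun _ j => cap j)).of_isClosed_subset hclosed ?_
  rintro Γ ⟨hpos, hcol, -⟩
  refine ⟨fun i j => hpos i j, fun i j => ?_⟩
  fin_cases i
  · exact (le_add_of_nonneg_right (hpos 1 j)).trans (hcol j)
  · exact (le_add_of_nonneg_left (hpos 0 j)).trans (hcol j)

section Exchange

variable [DecidableEq ι]

def exchange (j j' : ι) : Fin 2 → ι → ℝ :=
  ![Pi.single j 1 - Pi.single j' 1, Pi.single j' 1 - Pi.single j 1]

theorem transportCost_exchange (π : Fin 2 → ι → ℝ) (j j' : ι) :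
    transportCost π (exchange j j') = π 0 j - π 0 j' - (π 1 j - π 1 j') := by
  simp [transportCost, exchange, Fin.sum_univ_two, mul_sub, sum_sub_distrib,
    Pi.single_apply]
  ring

theorem add_smul_exchange_mem_partialTransportPlans {cap : ι → ℝ} {dem : Fin 2 → ℝ}
    {Γ : Fin 2 → ι → ℝ} (hΓ : Γ ∈ partialTransportPlans cap dem) {j j' : ι}
    (hjj' : j ≠ j') {δ : ℝ} (hδ : 0 ≤ δ) (hδ₁ : δ ≤ Γ 1 j) (hδ₀ : δ ≤ Γ 0 j') :
    Γ + δ • exchange j j' ∈ partialTransportPlans cap dem := by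
  obtain ⟨hpos, hcol, hrow⟩ := hΓ
  refine ⟨fun i k => ?_, fun k => ?_, fun i => ?_⟩
  · have := hpos 0 k
    have := hpos 1 k
    fin_cases i <;> simp [exchange, Pi.single_apply] <;> split_ifs <;> subst_vars <;>
      first | exact absurd rfl hjj' | linarith
  · convert hcol k using 1
    simp only [exchange, Pi.add_apply, Pi.smul_apply, smul_eq_mul, Matrix.cons_val_zero,
      Matrix.cons_val_one, Pi.sub_apply]
    ring
  · fin_cases i <;> simpa [exchange, sum_add_distrib, sum_sub_distrib, ← mul_sum] using hrow _

end Exchange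

variable [LinearOrder ι]

theorem exists_isMinOn_transportCost_without_crossing {π : Fin 2 → ι → ℝ}
    (hsub : ∀ j j', j' < j → π 1 j - π 0 j - π 1 j' + π 0 j' ≤ 0) {cap : ι → ℝ}
    {dem : Fin 2 → ℝ} (hne : (partialTransportPlans cap dem).Nonempty) :
    ∃ Γ ∈ partialTransportPlans cap dem,
      IsMinOn (transportCost π) (partialTransportPlans cap dem) Γ ∧
      ∀ j j', j < j' → Γ 1 j = 0 ∨ Γ 0 j' = 0 := by
  obtain ⟨w⟩ := nonempty_orderEmbedding_of_finite_infinite ι ℝ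
  obtain ⟨Γ, hΓ, hmin, hlex⟩ :=
    (isCompact_partialTransportPlans cap dem).exists_isMinOn_lex hne
      (continuous_transportCost π) (continuous_transportCost ![w, 0])
  refine ⟨Γ, hΓ, hmin, fun j j' hjj' => ?_⟩
  by_contra! hcross
  set δ := min (Γ 1 j) (Γ 0 j')
  have hδ : 0 < δ := lt_min ((hΓ.1 1 j).lt_of_ne' hcross.1) ((hΓ.1 0 j').lt_of_ne' hcross.2)
  have hmem := add_smul_exchange_mem_partialTransportPlans hΓ hjj'.ne hδ.le (min_le_left _ _)
    (min_le_right _ _)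
  have hcost : transportCost π (Γ + δ • exchange j j') ≤ transportCost π Γ := by
    rw [transportCost_add_smul, transportCost_exchange]
    nlinarith [hsub j' j hjj']
  have hpot : transportCost ![w, 0] (Γ + δ • exchange j j') < transportCost ![w, 0] Γ := by
    rw [transportCost_add_smul, transportCost_exchange]
    simp only [Matrix.cons_val_zero, Matrix.cons_val_one, Pi.zero_apply, sub_zero]
    nlinarith [w.strictMono hjj']
  exact (hlex _ hmem hcost).not_gt hpot

theorem exists_monotone_support_of_no_crossing [Nonempty ι] {Γ : Fin 2 → ι → ℝ}
    (h : ∀ j j', j < j' → Γ 1 j = 0 ∨ Γ 0 j' = 0) :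
    ∃ J, (∀ j, j < J → Γ 1 j = 0) ∧ (∀ j, J < j → Γ 0 j = 0) := by
  by_cases hzero : ∀ j, Γ 1 j = 0
  · obtain ⟨J, hJ⟩ := Finite.exists_max (id : ι → ι)
    exact ⟨J, fun j _ => hzero j, fun j hj => absurd (hJ j) hj.not_ge⟩
  push Not at hzero
  obtain ⟨J, hJ, hfirst⟩ := wellFounded_lt.has_min {j | Γ 1 j ≠ 0} hzero
  refine ⟨J, fun j hj => ?_, fun j hj => (h J j hj).resolve_left hJ⟩
  by_contra hj'
  exact hfirst j hj' hj

end PartialTransport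

/-- Lemma 4 (monotone-support lemma for the optimal partial transport problem): given submodular
costs `π(i,j)`, nonnegative capacities `Γ0(j)` and nonnegative demands `Γ1(i)` with
`Γ1(0) + Γ1(1) ≤ ∑_j Γ0(j)`, the feasible set of the partial transport linear program is
nonempty and admits a minimizer with monotone support. -/
theorem partial_transport_monotone_support
    {J : ℕ} (hJ : 1 ≤ J)
    (π : Fin 2 → Fin J → ℝ)
    (Γ0 : Fin J → ℝ) (hΓ0 : ∀ j, 0 ≤ Γ0 j)
    (Γ1 : Fin 2 → ℝ) (hΓ1 : ∀ i, 0 ≤ Γ1 i)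
    (hmass : Γ1 0 + Γ1 1 ≤ ∑ j, Γ0 j)
    (hsub : ∀ j j' : Fin J, j' < j → π 1 j - π 0 j - π 1 j' + π 0 j' ≤ 0) :
    {Γ : Fin 2 → Fin J → ℝ |
        (∀ i j, 0 ≤ Γ i j) ∧ (∀ j, Γ 0 j + Γ 1 j ≤ Γ0 j) ∧ (∀ i, ∑ j, Γ i j = Γ1 i)}.Nonempty ∧
      ∃ Γstar ∈ {Γ : Fin 2 → Fin J → ℝ |
          (∀ i j, 0 ≤ Γ i j) ∧ (∀ j, Γ 0 j + Γ 1 j ≤ Γ0 j) ∧ (∀ i, ∑ j, Γ i j = Γ1 i)},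
        (∀ Γ ∈ {Γ : Fin 2 → Fin J → ℝ |
            (∀ i j, 0 ≤ Γ i j) ∧ (∀ j, Γ 0 j + Γ 1 j ≤ Γ0 j) ∧ (∀ i, ∑ j, Γ i j = Γ1 i)},
          (∑ i, ∑ j, π i j * Γstar i j) ≤ ∑ i, ∑ j, π i j * Γ i j) ∧
        ∃ Jstar : Fin J, (∀ j, j < Jstar → Γstar 1 j = 0) ∧ (∀ j, Jstar < j → Γstar 0 j = 0) := by
  have : Nonempty (Fin J) := ⟨⟨0, hJ⟩⟩
  have hne : (partialTransportPlans Γ0 Γ1).Nonempty :=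
    partialTransportPlans_nonempty hΓ0 hΓ1 hmass
  obtain ⟨Γstar, hmem, hmin, hcross⟩ := exists_isMinOn_transportCost_without_crossing hsub hne
  exact ⟨hne, Γstar, hmem, fun Γ hΓ => hmin hΓ, exists_monotone_support_of_no_crossing hcross⟩
end
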